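/- arXiv:1603.09265 — 2 statements merged into one kernel-verified Lean document; each statement's English description precedes it below -/
import Mathlib

section
/- (Comparison principle, first form.) Let μ ∈ ℝ, q > 1, and let G ⊂ Ω be open. Let u, v ∈ C²(G) be nonnegative functions such that −Δu − (μ/δ_Ω²) u + u^q ≤ 0 and −Δv − (μ/δ_Ω²) v + v^q ≥ 0 pointwise in G (u a subsolution, v a supersolution), and suppose limsup_{x → ∂G} (u(x) − v(x)) < 0, i.e. there exist ε > 0 and an open neighborhood U of ∂G such that u − v ≤ −ε on G ∩ U. Then u ≤ v in G. -/
open MeasureTheory Metric Set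

noncomputable section

/-- Smooth compactly supported test function with support in `G`. -/
def IsTestFun {N : ℕ} (G : Set (EuclideanSpace ℝ (Fin N)))
    (φ : EuclideanSpace ℝ (Fin N) → ℝ) : Prop :=
  ContDiff ℝ (⊤ : ℕ∞) φ ∧ HasCompactSupport φ ∧ tsupport φ ⊆ G

/-- The Laplacian of `f`. -/
def lap {N : ℕ} (f : EuclideanSpace ℝ (Fin N) → ℝ) (x : EuclideanSpace ℝ (Fin N)) : ℝ :=
  ∑ i : Fin N, iteratedFDeriv ℝ 2 f x ![EuclideanSpace.single i 1, EuclideanSpace.single i 1]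

/-- A set has `C²` boundary if near every boundary point it is the sublevel
set of a `C²` function with nonvanishing derivative. -/
def HasC2Boundary {N : ℕ} (Ω : Set (EuclideanSpace ℝ (Fin N))) : Prop :=
  ∀ y ∈ frontier Ω, ∃ (U : Set (EuclideanSpace ℝ (Fin N))) (f : EuclideanSpace ℝ (Fin N) → ℝ),
    IsOpen U ∧ y ∈ U ∧ ContDiffOn ℝ 2 f U ∧ (∀ x ∈ U, fderiv ℝ f x ≠ 0) ∧
    Ω ∩ U = {x | x ∈ U ∧ f x < 0}

/-- The strip `Ω_ρ` of points in `Ω` at distance `< ρ` from the boundary `∂Ω`. -/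
def strip {N : ℕ} (Ω : Set (EuclideanSpace ℝ (Fin N))) (ρ : ℝ) :
    Set (EuclideanSpace ℝ (Fin N)) :=
  {x ∈ Ω | infDist x (frontier Ω) < ρ}

open Topology Filter

open Topology Filter

namespace Stmt8Aux

variable {N : ℕ}

local notation "E" => EuclideanSpace ℝ (Fin N)

lemma line_hasDerivAt {f : E → ℝ} {s : Set E} (hs : IsOpen s)
    (hf : DifferentiableOn ℝ f s) (x e : E) {t : ℝ} (hxt : x + t • e ∈ s) :
    HasDerivAt (fun τ : ℝ => f (x + τ • e)) (fderiv ℝ f (x + t • e) e) t := by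
  have hline : HasDerivAt (fun τ : ℝ => x + τ • e) e t := by
    simpa using ((hasDerivAt_id t).smul_const e).const_add x
  have hdf : DifferentiableAt ℝ f (x + t • e) := hf.differentiableAt (hs.mem_nhds hxt)
  exact hdf.hasFDerivAt.comp_hasDerivAt t hline

lemma line2_hasDerivAt {f : E → ℝ} {s : Set E} (hs : IsOpen s)
    (hf : ContDiffOn ℝ 2 f s) (x e : E) {t : ℝ} (hxt : x + t • e ∈ s) :
    HasDerivAt (fun τ : ℝ => fderiv ℝ f (x + τ • e) e)
      (fderiv ℝ (fderiv ℝ f) (x + t • e) e e) t := by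
  have hf1 : ContDiffOn ℝ 1 (fderiv ℝ f) s := hf.fderiv_of_isOpen hs (by norm_num)
  have hline : HasDerivAt (fun τ : ℝ => x + τ • e) e t := by
    simpa using ((hasDerivAt_id t).smul_const e).const_add x
  have hdf : DifferentiableAt ℝ (fderiv ℝ f) (x + t • e) :=
    (hf1.differentiableOn (by norm_num)).differentiableAt (hs.mem_nhds hxt)
  have h1 : HasDerivAt (fun τ : ℝ => fderiv ℝ f (x + τ • e))
      (fderiv ℝ (fderiv ℝ f) (x + t • e) e) t := hdf.hasFDerivAt.comp_hasDerivAt t hline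
  simpa using h1.clm_apply (hasDerivAt_const t e)

lemma lap_eq_sum (f : E → ℝ) (x : E) :
    lap f x = ∑ i : Fin N, fderiv ℝ (fderiv ℝ f) x (EuclideanSpace.single i 1)
      (EuclideanSpace.single i 1) := by
  unfold lap
  refine Finset.sum_congr rfl fun i _ => ?_
  rw [iteratedFDeriv_two_apply]; simp

/-- 1-D second derivative test at an interior minimum. -/
lemma deriv2_nonneg_of_min {φ φ' : ℝ → ℝ} {δ : ℝ} (hδ : 0 < δ) {a : ℝ}
    (hd : ∀ t ∈ Set.Ioo (-δ) δ, HasDerivAt φ (φ' t) t)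
    (hd2 : HasDerivAt φ' a 0)
    (hmin : ∀ t ∈ Set.Ioo (-δ) δ, φ 0 ≤ φ t) : 0 ≤ a := by
  by_contra hneg
  push_neg at hneg
  have hmem0 : (0:ℝ) ∈ Set.Ioo (-δ) δ := by constructor <;> linarith
  have hloc : IsLocalMin φ 0 :=
    Filter.eventually_of_mem (isOpen_Ioo.mem_nhds hmem0) (fun t ht => hmin t ht)
  have hφ'0 : φ' 0 = 0 := by
    have h1 := hloc.deriv_eq_zero
    rwa [(hd 0 hmem0).deriv] at h1
  have hslope : Filter.Tendsto (fun t => φ' t / t) (𝓝[≠] (0:ℝ)) (𝓝 a) := by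
    have h1 := hasDerivAt_iff_tendsto_slope.1 hd2
    have h2 : (slope φ' 0) = fun t => φ' t / t := by
      funext t; simp [slope_def_field, hφ'0]
    rwa [h2] at h1
  have hsl2 : Filter.Tendsto (fun t => φ' t / t) (𝓝[>] (0:ℝ)) (𝓝 a) :=
    hslope.mono_left (nhdsWithin_mono 0 (fun t ht => ne_of_gt ht))
  have hev : ∀ᶠ t in 𝓝[>] (0:ℝ), φ' t / t < a / 2 :=
    hsl2.eventually_lt_const (by linarith)
  obtain ⟨δ', hδ'mem, hδ'⟩ := mem_nhdsGT_iff_exists_Ioo_subset.1 hev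
  have hδ'pos : 0 < δ' := hδ'mem
  set δ₂ := min δ' δ / 2 with hδ₂def
  have hδ₂pos : 0 < δ₂ := by positivity
  have hδ₂δ : δ₂ < δ := by
    have : min δ' δ ≤ δ := min_le_right _ _
    simp only [hδ₂def]; linarith
  have hδ₂δ' : δ₂ < δ' := by
    have : min δ' δ ≤ δ' := min_le_left _ _
    simp only [hδ₂def]; linarith
  have hsub : Set.Icc (0:ℝ) δ₂ ⊆ Set.Ioo (-δ) δ := by
    intro t ht
    exact ⟨by linarith [ht.1], by linarith [ht.2]⟩
  have hanti : StrictAntiOn φ (Set.Icc 0 δ₂) := by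
    apply strictAntiOn_of_deriv_neg (convex_Icc 0 δ₂)
    · intro t ht
      exact (hd t (hsub ht)).continuousAt.continuousWithinAt
    · intro t ht
      rw [interior_Icc] at ht
      rw [(hd t (hsub ⟨le_of_lt ht.1, le_of_lt ht.2⟩)).deriv]
      have h3 : φ' t / t < a / 2 := hδ' ⟨ht.1, lt_trans ht.2 hδ₂δ'⟩
      have h4 : φ' t = (φ' t / t) * t := (div_mul_cancel₀ _ (ne_of_gt ht.1)).symm
      nlinarith [ht.1]
  have h5 : φ δ₂ < φ 0 :=
    hanti (Set.left_mem_Icc.2 (le_of_lt hδ₂pos)) (Set.right_mem_Icc.2 (le_of_lt hδ₂pos)) hδ₂pos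
  have h6 := hmin δ₂ ⟨by linarith, hδ₂δ⟩
  linarith

lemma deriv2_nonpos_of_max {φ φ' : ℝ → ℝ} {δ : ℝ} (hδ : 0 < δ) {a : ℝ}
    (hd : ∀ t ∈ Set.Ioo (-δ) δ, HasDerivAt φ (φ' t) t)
    (hd2 : HasDerivAt φ' a 0)
    (hmax : ∀ t ∈ Set.Ioo (-δ) δ, φ t ≤ φ 0) : a ≤ 0 := by
  have := deriv2_nonneg_of_min (φ := fun t => -φ t) (φ' := fun t => -φ' t) hδ
    (fun t ht => (hd t ht).neg) hd2.neg (fun t ht => neg_le_neg (hmax t ht))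
  linarith

end Stmt8Aux

open Topology Filter
namespace Stmt8Aux

variable {N : ℕ}

local notation "E" => EuclideanSpace ℝ (Fin N)

lemma exists_line_delta {s : Set E} (hs : IsOpen s) {x : E} (hx : x ∈ s) (e : E) :
    ∃ δ > (0:ℝ), ∀ t : ℝ, t ∈ Set.Ioo (-δ) δ → x + t • e ∈ s := by
  have hcont : Continuous (fun t : ℝ => x + t • e) := by continuity
  have hopen : IsOpen ((fun t : ℝ => x + t • e) ⁻¹' s) := hs.preimage hcont
  have h0 : (0:ℝ) ∈ (fun t : ℝ => x + t • e) ⁻¹' s := by simpa using hx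
  obtain ⟨δ, hδ, hball⟩ := Metric.isOpen_iff.1 hopen 0 h0
  refine ⟨δ, hδ, fun t ht => ?_⟩
  apply hball
  rw [Real.ball_eq_Ioo]
  simpa using ht

lemma q_nonneg_at_min {f : E → ℝ} {s : Set E} (hs : IsOpen s)
    (hf : ContDiffOn ℝ 2 f s) {x : E} (hx : x ∈ s)
    (hmin : ∀ y ∈ s, f x ≤ f y) (e : E) :
    0 ≤ fderiv ℝ (fderiv ℝ f) x e e := by
  obtain ⟨δ, hδ, hline⟩ := exists_line_delta hs hx e
  have hd : ∀ t ∈ Set.Ioo (-δ) δ,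
      HasDerivAt (fun τ : ℝ => f (x + τ • e)) (fderiv ℝ f (x + t • e) e) t :=
    fun t ht => line_hasDerivAt hs (hf.differentiableOn (by norm_num)) x e (hline t ht)
  have hd2 : HasDerivAt (fun t : ℝ => fderiv ℝ f (x + t • e) e)
      (fderiv ℝ (fderiv ℝ f) x e e) 0 := by
    have h0 : x + (0:ℝ) • e ∈ s := by simpa using hx
    have := line2_hasDerivAt hs hf x e h0
    simpa using this
  have hmin' : ∀ t ∈ Set.Ioo (-δ) δ, f (x + (0:ℝ) • e) ≤ f (x + t • e) := by
    intro t ht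
    simpa using hmin _ (hline t ht)
  exact deriv2_nonneg_of_min hδ hd hd2 hmin'

lemma q_nonpos_at_max {f : E → ℝ} {s : Set E} (hs : IsOpen s)
    (hf : ContDiffOn ℝ 2 f s) {x : E} (hx : x ∈ s)
    (hmax : ∀ y ∈ s, f y ≤ f x) (e : E) :
    fderiv ℝ (fderiv ℝ f) x e e ≤ 0 := by
  obtain ⟨δ, hδ, hline⟩ := exists_line_delta hs hx e
  have hd : ∀ t ∈ Set.Ioo (-δ) δ,
      HasDerivAt (fun τ : ℝ => f (x + τ • e)) (fderiv ℝ f (x + t • e) e) t :=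
    fun t ht => line_hasDerivAt hs (hf.differentiableOn (by norm_num)) x e (hline t ht)
  have hd2 : HasDerivAt (fun t : ℝ => fderiv ℝ f (x + t • e) e)
      (fderiv ℝ (fderiv ℝ f) x e e) 0 := by
    have h0 : x + (0:ℝ) • e ∈ s := by simpa using hx
    have := line2_hasDerivAt hs hf x e h0
    simpa using this
  have hmax' : ∀ t ∈ Set.Ioo (-δ) δ, f (x + t • e) ≤ f (x + (0:ℝ) • e) := by
    intro t ht
    simpa using hmax _ (hline t ht)
  exact deriv2_nonpos_of_max hδ hd hd2 hmax'

lemma fderiv_eq_on_open {f g : E → ℝ} {s : Set E} (hs : IsOpen s)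
    (hfg : ∀ y ∈ s, f y = g y) {x : E} (hx : x ∈ s) :
    fderiv ℝ f x = fderiv ℝ g x :=
  Filter.EventuallyEq.fderiv_eq (Filter.eventually_of_mem (hs.mem_nhds hx) hfg)

lemma q_congr {f g : E → ℝ} {s : Set E} (hs : IsOpen s) (hfg : ∀ y ∈ s, f y = g y)
    {x : E} (hx : x ∈ s) : fderiv ℝ (fderiv ℝ f) x = fderiv ℝ (fderiv ℝ g) x := by
  have h1 : ∀ y ∈ s, fderiv ℝ f y = fderiv ℝ g y := fun y hy => fderiv_eq_on_open hs hfg hy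
  exact Filter.EventuallyEq.fderiv_eq (Filter.eventually_of_mem (hs.mem_nhds hx) h1)

/-- second derivative of `v - τ * h + c` in direction `e`. -/
lemma q_sub_smul {v h : E → ℝ} {s : Set E} (hs : IsOpen s) (hv : ContDiffOn ℝ 2 v s)
    (hh : ContDiffOn ℝ 2 h s) (τ c : ℝ) {x : E} (hx : x ∈ s) (e : E) :
    fderiv ℝ (fderiv ℝ (fun y => v y - τ * h y + c)) x e e
      = fderiv ℝ (fderiv ℝ v) x e e - τ * fderiv ℝ (fderiv ℝ h) x e e := by
  set w := fun y => v y - τ * h y + c with hw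
  have hwC2 : ContDiffOn ℝ 2 w s := (hv.sub (contDiffOn_const.mul hh)).add contDiffOn_const
  have h0 : x + (0:ℝ) • e ∈ s := by simpa using hx
  have hB : HasDerivAt (fun t : ℝ => fderiv ℝ w (x + t • e) e)
      (fderiv ℝ (fderiv ℝ w) x e e) 0 := by simpa using line2_hasDerivAt hs hwC2 x e h0
  -- explicit formula for fderiv of w on s
  have hfd : ∀ y ∈ s, fderiv ℝ w y e = fderiv ℝ v y e - τ * fderiv ℝ h y e := by
    intro y hy
    have hva : DifferentiableAt ℝ v y := (hv.differentiableOn (by norm_num)).differentiableAt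
      (hs.mem_nhds hy)
    have hha : DifferentiableAt ℝ h y := (hh.differentiableOn (by norm_num)).differentiableAt
      (hs.mem_nhds hy)
    have : fderiv ℝ w y = fderiv ℝ (fun y => v y - τ * h y) y := by
      rw [hw]
      exact fderiv_add_const c
    rw [this, fderiv_fun_sub hva (hha.const_mul τ), fderiv_const_mul hha τ]
    simp
  -- explicit HasDerivAt of the RHS function
  obtain ⟨δ, hδ, hline⟩ := exists_line_delta hs hx e
  have hrhs : HasDerivAt (fun t : ℝ => fderiv ℝ v (x + t • e) e - τ * fderiv ℝ h (x + t • e) e)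
      (fderiv ℝ (fderiv ℝ v) x e e - τ * fderiv ℝ (fderiv ℝ h) x e e) 0 := by
    have h1 : HasDerivAt (fun t : ℝ => fderiv ℝ v (x + t • e) e)
        (fderiv ℝ (fderiv ℝ v) x e e) 0 := by simpa using line2_hasDerivAt hs hv x e h0
    have h2 : HasDerivAt (fun t : ℝ => fderiv ℝ h (x + t • e) e)
        (fderiv ℝ (fderiv ℝ h) x e e) 0 := by simpa using line2_hasDerivAt hs hh x e h0
    exact h1.sub (h2.const_mul τ)
  -- the two functions agree near 0
  have heq : (fun t : ℝ => fderiv ℝ w (x + t • e) e)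
      =ᶠ[𝓝 (0:ℝ)] (fun t : ℝ => fderiv ℝ v (x + t • e) e - τ * fderiv ℝ h (x + t • e) e) := by
    have hmem : Set.Ioo (-δ) δ ∈ 𝓝 (0:ℝ) := isOpen_Ioo.mem_nhds (by constructor <;> linarith)
    exact Filter.eventually_of_mem hmem (fun t ht => hfd _ (hline t ht))
  have hB' := hB.congr_of_eventuallyEq heq.symm
  exact HasDerivAt.unique hB' hrhs

/-- second derivative of a product in direction `e`. -/
lemma q_mul {f v : E → ℝ} {s : Set E} (hs : IsOpen s) (hf : ContDiffOn ℝ 2 f s)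
    (hv : ContDiffOn ℝ 2 v s) {x : E} (hx : x ∈ s) (e : E) :
    fderiv ℝ (fderiv ℝ (fun y => f y * v y)) x e e
      = fderiv ℝ (fderiv ℝ f) x e e * v x + 2 * (fderiv ℝ f x e) * (fderiv ℝ v x e)
        + f x * fderiv ℝ (fderiv ℝ v) x e e := by
  set w := fun y => f y * v y with hw
  have hwC2 : ContDiffOn ℝ 2 w s := hf.mul hv
  have h0 : x + (0:ℝ) • e ∈ s := by simpa using hx
  have hB : HasDerivAt (fun t : ℝ => fderiv ℝ w (x + t • e) e)
      (fderiv ℝ (fderiv ℝ w) x e e) 0 := by simpa using line2_hasDerivAt hs hwC2 x e h0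
  have hfd : ∀ y ∈ s, fderiv ℝ w y e = fderiv ℝ f y e * v y + f y * fderiv ℝ v y e := by
    intro y hy
    have hfa : DifferentiableAt ℝ f y := (hf.differentiableOn (by norm_num)).differentiableAt
      (hs.mem_nhds hy)
    have hva : DifferentiableAt ℝ v y := (hv.differentiableOn (by norm_num)).differentiableAt
      (hs.mem_nhds hy)
    rw [hw, fderiv_fun_mul hfa hva]
    simp
    ring
  obtain ⟨δ, hδ, hline⟩ := exists_line_delta hs hx e
  have h1 : HasDerivAt (fun t : ℝ => fderiv ℝ f (x + t • e) e)
      (fderiv ℝ (fderiv ℝ f) x e e) 0 := by simpa using line2_hasDerivAt hs hf x e h0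
  have h2 : HasDerivAt (fun t : ℝ => fderiv ℝ v (x + t • e) e)
      (fderiv ℝ (fderiv ℝ v) x e e) 0 := by simpa using line2_hasDerivAt hs hv x e h0
  have h3 : HasDerivAt (fun t : ℝ => f (x + t • e)) (fderiv ℝ f x e) 0 := by
    simpa using line_hasDerivAt hs (hf.differentiableOn (by norm_num)) x e h0
  have h4 : HasDerivAt (fun t : ℝ => v (x + t • e)) (fderiv ℝ v x e) 0 := by
    simpa using line_hasDerivAt hs (hv.differentiableOn (by norm_num)) x e h0
  have hrhs : HasDerivAt
      (fun t : ℝ => fderiv ℝ f (x + t • e) e * v (x + t • e)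
        + f (x + t • e) * fderiv ℝ v (x + t • e) e)
      (fderiv ℝ (fderiv ℝ f) x e e * v x + 2 * (fderiv ℝ f x e) * (fderiv ℝ v x e)
        + f x * fderiv ℝ (fderiv ℝ v) x e e) 0 := by
    have := (h1.mul h4).add (h3.mul h2)
    simp only [zero_smul, add_zero] at this
    exact this.congr_deriv (by ring)
  have heq : (fun t : ℝ => fderiv ℝ w (x + t • e) e)
      =ᶠ[𝓝 (0:ℝ)] (fun t : ℝ => fderiv ℝ f (x + t • e) e * v (x + t • e)
        + f (x + t • e) * fderiv ℝ v (x + t • e) e) := by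
    have hmem : Set.Ioo (-δ) δ ∈ 𝓝 (0:ℝ) := isOpen_Ioo.mem_nhds (by constructor <;> linarith)
    exact Filter.eventually_of_mem hmem (fun t ht => hfd _ (hline t ht))
  exact HasDerivAt.unique (hB.congr_of_eventuallyEq heq.symm) hrhs

end Stmt8Aux

open Topology Filter
namespace Stmt8Aux

variable {N : ℕ}

local notation "E" => EuclideanSpace ℝ (Fin N)

lemma gaussian_contDiff (α : ℝ) (p : E) :
    ContDiff ℝ 2 (fun y : E => Real.exp (-α * ‖y - p‖^2)) := by
  have h1 : ContDiff ℝ 2 (fun y : E => ‖y - p‖^2) :=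
    (contDiff_norm_sq ℝ).comp (contDiff_id.sub contDiff_const)
  exact Real.contDiff_exp.comp (contDiff_const.mul h1)

lemma poly_hasDerivAt (α c0 b E2 t : ℝ) :
    HasDerivAt (fun t : ℝ => -α * (c0 + 2*b*t + E2*t^2)) (-α * (2*b + 2*E2*t)) t := by
  have h1 : HasDerivAt (fun t : ℝ => c0 + 2*b*t + E2*t^2) (2*b + 2*E2*t) t := by
    have ha : HasDerivAt (fun t : ℝ => 2*b*t) (2*b) t := by
      simpa using (hasDerivAt_id t).const_mul (2*b)
    have hb : HasDerivAt (fun t : ℝ => E2*t^2) (E2*(2*t)) t := by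
      simpa using (hasDerivAt_pow 2 t).const_mul E2
    have := (ha.const_add c0).add hb
    exact this.congr_deriv (by ring)
  simpa using h1.const_mul (-α)

lemma gauss1d_hasDerivAt (α c0 b E2 t : ℝ) :
    HasDerivAt (fun t : ℝ => Real.exp (-α * (c0 + 2*b*t + E2*t^2)))
      (Real.exp (-α * (c0 + 2*b*t + E2*t^2)) * (-α * (2*b + 2*E2*t))) t :=
  (poly_hasDerivAt α c0 b E2 t).exp

lemma gauss1d_deriv2 (α c0 b E2 : ℝ) :
    HasDerivAt (fun t : ℝ => Real.exp (-α * (c0 + 2*b*t + E2*t^2)) * (-α * (2*b + 2*E2*t)))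
      ((4*α^2*b^2 - 2*α*E2) * Real.exp (-α * c0)) 0 := by
  have hlin : HasDerivAt (fun t : ℝ => -α * (2*b + 2*E2*t)) (-α * (2*E2)) 0 := by
    have h0 : HasDerivAt (fun t : ℝ => 2*b + 2*E2*t) (2*E2) 0 := by
      simpa using ((hasDerivAt_id (0:ℝ)).const_mul (2*E2)).const_add (2*b)
    simpa using h0.const_mul (-α)
  have h1 := (gauss1d_hasDerivAt α c0 b E2 0).mul hlin
  exact h1.congr_deriv (by simp; ring)

lemma line_norm_sq (p x e : E) (t : ℝ) :
    ‖x + t • e - p‖^2 = ‖x - p‖^2 + 2*(inner ℝ (x-p) e : ℝ)*t + ‖e‖^2*t^2 := by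
  have : x + t • e - p = (x - p) + t • e := by abel
  rw [this, norm_add_sq_real, real_inner_smul_right, norm_smul]
  simp [Real.norm_eq_abs, mul_pow, sq_abs]
  ring

/-- Second derivative of the Gaussian in direction `e`. -/
lemma q_gaussian (α : ℝ) (p x e : E) :
    fderiv ℝ (fderiv ℝ (fun y : E => Real.exp (-α * ‖y - p‖^2))) x e e
      = (4*α^2*(inner ℝ (x-p) e : ℝ)^2 - 2*α*‖e‖^2) * Real.exp (-α * ‖x - p‖^2) := by
  set hb := fun y : E => Real.exp (-α * ‖y - p‖^2) with hhb
  have hbC2 : ContDiffOn ℝ 2 hb univ := (gaussian_contDiff α p).contDiffOn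
  set c0 := ‖x - p‖^2
  set b := (inner ℝ (x-p) e : ℝ)
  set E2 := ‖e‖^2
  have hfun : (fun t : ℝ => hb (x + t • e))
      = fun t : ℝ => Real.exp (-α * (c0 + 2*b*t + E2*t^2)) := by
    funext t
    rw [hhb]
    simp only
    rw [line_norm_sq p x e t]
  -- identify the first directional derivative
  have hDeq : ∀ t : ℝ, fderiv ℝ hb (x + t • e) e
      = Real.exp (-α * (c0 + 2*b*t + E2*t^2)) * (-α * (2*b + 2*E2*t)) := by
    intro t
    have hA : HasDerivAt (fun τ : ℝ => hb (x + τ • e)) (fderiv ℝ hb (x + t • e) e) t :=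
      line_hasDerivAt isOpen_univ (hbC2.differentiableOn (by norm_num)) x e (mem_univ _)
    have hA' : HasDerivAt (fun τ : ℝ => hb (x + τ • e))
        (Real.exp (-α * (c0 + 2*b*t + E2*t^2)) * (-α * (2*b + 2*E2*t))) t := by
      rw [hfun]; exact gauss1d_hasDerivAt α c0 b E2 t
    exact hA.unique hA'
  have hB : HasDerivAt (fun t : ℝ => fderiv ℝ hb (x + t • e) e)
      (fderiv ℝ (fderiv ℝ hb) x e e) 0 := by
    simpa using line2_hasDerivAt isOpen_univ hbC2 x e (mem_univ (x + (0:ℝ) • e))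
  have hB' : HasDerivAt (fun t : ℝ => Real.exp (-α * (c0 + 2*b*t + E2*t^2)) * (-α * (2*b + 2*E2*t)))
      (fderiv ℝ (fderiv ℝ hb) x e e) 0 := by
    apply hB.congr_of_eventuallyEq
    exact Filter.Eventually.of_forall (fun t => (hDeq t).symm)
  have := hB'.unique (gauss1d_deriv2 α c0 b E2)
  rw [this]

/-- Laplacian of the Gaussian. -/
lemma lap_gaussian (α : ℝ) (p x : E) :
    lap (fun y : E => Real.exp (-α * ‖y - p‖^2)) x
      = (4*α^2*‖x - p‖^2 - 2*α*N) * Real.exp (-α * ‖x - p‖^2) := by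
  rw [lap_eq_sum]
  have h1 : ∀ i : Fin N, fderiv ℝ (fderiv ℝ (fun y : E => Real.exp (-α * ‖y - p‖^2))) x
      (EuclideanSpace.single i 1) (EuclideanSpace.single i 1)
      = (4*α^2*((x-p) i)^2 - 2*α) * Real.exp (-α * ‖x - p‖^2) := by
    intro i
    rw [q_gaussian]
    have h2 : (inner ℝ (x-p) (EuclideanSpace.single i (1:ℝ)) : ℝ) = (x-p) i := by simp [EuclideanSpace.inner_single_right]
    have h3 : ‖EuclideanSpace.single i (1:ℝ)‖ = 1 := by simp
    rw [h2, h3]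
    norm_num
  rw [Finset.sum_congr rfl (fun i _ => h1 i)]
  rw [← Finset.sum_mul]
  congr 1
  have h4 : ∑ i : Fin N, ((x-p) i)^2 = ‖x - p‖^2 := by
    rw [EuclideanSpace.norm_eq, Real.sq_sqrt (by positivity)]
    simp [sq_abs]
  rw [Finset.sum_sub_distrib, ← Finset.mul_sum, h4, Finset.sum_const]
  simp only [Finset.card_univ, Fintype.card_fin, nsmul_eq_mul]
  ring

end Stmt8Aux

open Topology Filter
namespace Stmt8Aux

variable {N : ℕ}

local notation "E" => EuclideanSpace ℝ (Fin N)

lemma not_bounded_univ (hN : 2 ≤ N) : ¬ Bornology.IsBounded (univ : Set E) := by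
  intro h
  obtain ⟨r, hr⟩ := (isBounded_iff_forall_norm_le).1 h
  have i0 : Fin N := ⟨0, by omega⟩
  have h1 := hr (EuclideanSpace.single i0 (r+1)) (mem_univ _)
  rw [EuclideanSpace.norm_single] at h1
  have h2 := le_abs_self (r+1)
  have h3 : (0:ℝ) ≤ |r+1| := abs_nonneg _
  rw [Real.norm_eq_abs] at h1
  linarith

lemma frontier_nonempty' (hN : 2 ≤ N) {s : Set E} (hb : Bornology.IsBounded s)
    (hne : s.Nonempty) : (frontier s).Nonempty := by
  by_contra h
  rw [not_nonempty_iff_eq_empty] at h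
  rcases frontier_eq_empty_iff.1 h with h1 | h1
  · exact absurd h1 (Set.nonempty_iff_ne_empty.1 hne)
  · rw [h1] at hb
    exact not_bounded_univ hN hb

set_option maxHeartbeats 2000000 in
/-- A nonnegative supersolution which is `≥ ε` near the boundary is positive. -/
lemma supersol_pos (hN : 2 ≤ N) {G U : Set E} {v c : E → ℝ} {q ε : ℝ}
    (hq : 1 < q) (hε : 0 < ε)
    (hGo : IsOpen G) (hGb : Bornology.IsBounded G)
    (hv : ContDiffOn ℝ 2 v G) (hv0 : ∀ x ∈ G, 0 ≤ v x)
    (hsup : ∀ x ∈ G, lap v x ≤ v x ^ q - c x * v x)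
    (hcb : ∀ Kc : Set E, IsCompact Kc → Kc ⊆ G → ∃ C : ℝ, ∀ x ∈ Kc, -C ≤ c x)
    (hUo : IsOpen U) (hfr : frontier G ⊆ U) (hvU : ∀ x ∈ G, x ∈ U → ε ≤ v x) :
    ∀ x ∈ G, 0 < v x := by
  intro y hyG
  rcases (hv0 y hyG).lt_or_eq with hpos | hzero
  · exact hpos
  exfalso
  have hy0 : v y = 0 := hzero.symm
  -- the zero set S is compact
  set S := {x | x ∈ G ∧ v x = 0} with hSdef
  have hSsub : S ⊆ G := fun x hx => hx.1
  have hSU : ∀ x ∈ S, x ∉ U := by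
    intro x hx hxU
    have h1 := hvU x hx.1 hxU
    rw [hx.2] at h1; linarith
  have hvcont : ∀ x ∈ G, ContinuousAt v x := fun x hx =>
    (hv.continuousOn.continuousWithinAt hx).continuousAt (hGo.mem_nhds hx)
  have hScl : IsClosed S := by
    apply isClosed_of_closure_subset
    intro z hz
    have hzG' : z ∈ closure G := closure_mono hSsub hz
    have hzU : z ∉ U := by
      have h2 : closure S ⊆ closure (Uᶜ) := closure_mono (fun x hx => hSU x hx)
      have hz2 := h2 hz
      rwa [IsClosed.closure_eq (isClosed_compl_iff.2 hUo)] at hz2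
    have hzG : z ∈ G := by
      by_contra hzG
      have h3 : z ∈ frontier G := by rw [hGo.frontier_eq]; exact ⟨hzG', hzG⟩
      exact hzU (hfr h3)
    refine ⟨hzG, ?_⟩
    have hne : (𝓝[S] z).NeBot := mem_closure_iff_nhdsWithin_neBot.1 hz
    have h1 : Filter.Tendsto v (𝓝[S] z) (𝓝 (v z)) := (hvcont z hzG).continuousWithinAt
    have h2 : Filter.Tendsto v (𝓝[S] z) (𝓝 0) := by
      apply Filter.Tendsto.congr' _ tendsto_const_nhds
      exact Filter.eventually_of_mem self_mem_nhdsWithin (fun x hx => hx.2.symm)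
    exact tendsto_nhds_unique h1 h2
  have hScomp : IsCompact S := Metric.isCompact_of_isClosed_isBounded hScl (hGb.subset hSsub)
  -- connected component of y in G
  set C := connectedComponentIn G y with hCdef
  have hCo : IsOpen C := hGo.connectedComponentIn
  have hCG : C ⊆ G := connectedComponentIn_subset G y
  have hCconn : IsConnected C := (isConnected_connectedComponentIn_iff).2 hyG
  have hyC : y ∈ C := mem_connectedComponentIn hyG
  -- find a point of C in U, where v is positive
  obtain ⟨z, hzC⟩ := frontier_nonempty' hN (hGb.subset hCG) ⟨y, hyC⟩
  rw [hCo.frontier_eq] at hzC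
  have hzncl : z ∈ closure C := hzC.1
  have hznC : z ∉ C := hzC.2
  have hzG : z ∉ G := by
    intro hzG
    obtain ⟨r, hr, hball⟩ := Metric.isOpen_iff.1 hGo z hzG
    obtain ⟨w1, hw1B, hw1C⟩ : (Metric.ball z r ∩ C).Nonempty :=
      mem_closure_iff.1 hzncl _ Metric.isOpen_ball (Metric.mem_ball_self hr)
    have hpre : IsPreconnected (Metric.ball z r ∪ C) :=
      IsPreconnected.union w1 hw1B hw1C (convex_ball z r).isPreconnected
        hCconn.isPreconnected
    have hsubG : Metric.ball z r ∪ C ⊆ G := union_subset hball hCG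
    have hsubC : Metric.ball z r ∪ C ⊆ C :=
      hpre.subset_connectedComponentIn (mem_union_right _ hyC) hsubG
    exact hznC (hsubC (mem_union_left _ (Metric.mem_ball_self hr)))
  have hzfr : z ∈ frontier G := by
    rw [hGo.frontier_eq]
    exact ⟨closure_mono hCG hzncl, hzG⟩
  obtain ⟨w0, hw0U, hw0C⟩ : (U ∩ C).Nonempty :=
    mem_closure_iff.1 hzncl U hUo (hfr hzfr)
  have hw0G : w0 ∈ G := hCG hw0C
  have hw0pos : 0 < v w0 := lt_of_lt_of_le hε (hvU w0 hw0G hw0U)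
  -- positivity set D
  set D := {x | x ∈ C ∧ 0 < v x} with hDdef
  have hDo : IsOpen D := by
    have h1 : IsOpen (G ∩ v ⁻¹' (Set.Ioi 0)) :=
      hv.continuousOn.isOpen_inter_preimage hGo isOpen_Ioi
    have h2 : D = C ∩ (G ∩ v ⁻¹' (Set.Ioi 0)) := by
      ext x
      constructor
      · intro hx; exact ⟨hx.1, hCG hx.1, hx.2⟩
      · intro hx; exact ⟨hx.1, hx.2.2⟩
    rw [h2]; exact hCo.inter h1
  have hDC : D ⊆ C := fun x hx => hx.1
  -- a zero of v in the closure of D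
  obtain ⟨y0, hy0C, hy0v, hy0cl⟩ : ∃ y0, y0 ∈ C ∧ v y0 = 0 ∧ y0 ∈ closure D := by
    by_contra hcon
    push_neg at hcon
    have hcover : C ⊆ (C \ closure D) ∪ D := by
      intro x hx
      rcases (hv0 x (hCG hx)).lt_or_eq with hp | hz
      · exact Or.inr ⟨hx, hp⟩
      · exact Or.inl ⟨hx, fun hmem => hcon x hx hz.symm hmem⟩
    have hO1 : IsOpen (C \ closure D) := hCo.sdiff isClosed_closure
    obtain ⟨x, hx⟩ := hCconn.isPreconnected _ _ hO1 hDo hcover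
      ⟨y, hyC, hyC, fun hmem => hcon y hyC hy0 hmem⟩ ⟨w0, hw0C, hw0C, hw0pos⟩
    exact hx.2.1.2 (subset_closure hx.2.2)
  -- choose p close to y0
  obtain ⟨r, hrpos, hballG⟩ := Metric.isOpen_iff.1 hGo y0 (hCG hy0C)
  obtain ⟨p, hpD, hpdist⟩ : ∃ p ∈ D, dist y0 p < r/4 :=
    Metric.mem_closure_iff.1 hy0cl (r/4) (by positivity)
  have hSne : S.Nonempty := ⟨y0, hCG hy0C, hy0v⟩
  set R := infDist p S with hRdef
  clear_value R
  obtain ⟨ystar, hystarS, hystard⟩ := hScomp.exists_infDist_eq_dist hSne p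
  have hpG : p ∈ G := hCG (hDC hpD)
  have hppos : 0 < v p := hpD.2
  have hRpos : 0 < R := by
    rw [hRdef, hystard, dist_pos]
    intro heq
    rw [heq, hystarS.2] at hppos
    linarith
  have hRr : R < r/4 := by
    have h1 : R ≤ dist y0 p := by
      rw [hRdef, dist_comm]
      exact infDist_le_dist_of_mem ⟨hCG hy0C, hy0v⟩
    exact lt_of_le_of_lt h1 hpdist
  have hball2 : Metric.closedBall p R ⊆ G := by
    intro x hx
    apply hballG
    rw [Metric.mem_closedBall] at hx
    rw [Metric.mem_ball]
    have h1 : dist x y0 ≤ dist x p + dist p y0 := dist_triangle x p y0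
    have h2 : dist p y0 = dist y0 p := dist_comm p y0
    linarith
  have hvball : ∀ x ∈ Metric.ball p R, 0 < v x := by
    intro x hx
    have hxG : x ∈ G := hball2 (Metric.ball_subset_closedBall hx)
    rcases (hv0 x hxG).lt_or_eq with h1 | h1
    · exact h1
    exfalso
    have h2 : infDist p S ≤ dist p x := infDist_le_dist_of_mem ⟨hxG, h1.symm⟩
    rw [Metric.mem_ball, dist_comm] at hx
    rw [← hRdef] at h2
    linarith
  -- the constant Λ
  obtain ⟨Cc, hCc⟩ := hcb (Metric.closedBall p R) (isCompact_closedBall p R) hball2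
  obtain ⟨xm, hxm, hxmmax⟩ := (isCompact_closedBall p R).exists_isMaxOn
    (Metric.nonempty_closedBall.2 hRpos.le) (hv.continuousOn.mono hball2)
  set M := v xm with hMdef
  clear_value M
  set Λ := 1 + max Cc 0 + M ^ (q-1) with hΛdef
  clear_value Λ
  have hM0 : 0 ≤ M := by rw [hMdef]; exact hv0 xm (hball2 hxm)
  have hΛ1 : 1 ≤ Λ := by
    have h1 : 0 ≤ max Cc 0 := le_max_right _ _
    have h2 : 0 ≤ M ^ (q-1) := Real.rpow_nonneg hM0 _
    rw [hΛdef]; linarith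
  have hlapv : ∀ x ∈ Metric.ball p R, lap v x ≤ Λ * v x := by
    intro x hx
    have hxG := hball2 (Metric.ball_subset_closedBall hx)
    have hvx : 0 < v x := hvball x hx
    have h1 := hsup x hxG
    have h2 : v x ^ q = v x ^ (q-1) * v x := by
      have h3 := Real.rpow_add hvx (q-1) 1
      rw [Real.rpow_one] at h3
      rw [show q-1+1 = q by ring] at h3
      exact h3
    have h3 : v x ^ (q-1) ≤ M ^ (q-1) := by
      rw [hMdef]
      exact Real.rpow_le_rpow hvx.le (hxmmax (Metric.ball_subset_closedBall hx)) (by linarith)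
    have h4 : -Cc ≤ c x := hCc x (Metric.ball_subset_closedBall hx)
    have h5 : v x ^ (q-1) - c x ≤ Λ := by
      have h6 := le_max_left Cc 0
      rw [hΛdef]; linarith
    calc lap v x ≤ v x ^ q - c x * v x := h1
      _ = (v x ^ (q-1) - c x) * v x := by rw [h2]; ring
      _ ≤ Λ * v x := mul_le_mul_of_nonneg_right h5 hvx.le
  -- the barrier
  set α := (2*N+1)/R^2 + Λ with hαdef
  clear_value α
  have hR2 : (0:ℝ) < R^2 := by positivity
  have hαΛ : Λ ≤ α := by
    have h1 : (0:ℝ) < (2*N+1)/R^2 := by positivity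
    rw [hαdef]; linarith
  have hαpos : 0 < α := by linarith
  have hαR2 : α * R^2 = 2*N+1+Λ*R^2 := by
    rw [hαdef, add_mul, div_mul_cancel₀]
    exact ne_of_gt hR2
  set k := Real.exp (-α * R^2) with hkdef
  clear_value k
  set hb := fun y : E => Real.exp (-α * ‖y - p‖^2) with hhbdef
  have hbC2G : ContDiffOn ℝ 2 hb G := (gaussian_contDiff α p).contDiffOn
  have hbnorm : ∀ x : E, hb x = Real.exp (-α * (dist x p)^2) := by
    intro x
    rw [hhbdef, dist_eq_norm]
  have hlaphb : ∀ x : E, R/2 ≤ dist x p → dist x p ≤ R → Λ * (hb x - k) ≤ lap hb x := by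
    intro x h1 h2
    have hgoal : lap hb x = (4*α^2*‖x - p‖^2 - 2*α*N) * Real.exp (-α * ‖x - p‖^2) := by
      rw [hhbdef]; exact lap_gaussian α p x
    rw [hgoal]
    have hbx : hb x = Real.exp (-α * ‖x - p‖^2) := rfl
    rw [hbx]
    have hdn : ‖x - p‖ = dist x p := (dist_eq_norm x p).symm
    have hd2 : R^2/4 ≤ ‖x - p‖^2 := by
      rw [hdn]
      nlinarith [dist_nonneg (x := x) (y := p)]
    have hexp_pos : 0 < Real.exp (-α * ‖x - p‖^2) := Real.exp_pos _
    have hkey : Λ ≤ 4*α^2*‖x - p‖^2 - 2*α*N := by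
      have h6 : α^2 * (R^2/4) ≤ α^2 * ‖x - p‖^2 := mul_le_mul_of_nonneg_left hd2 (sq_nonneg α)
      have h7 : α^2 * R^2 - 2*α*N = α + α*Λ*R^2 := by
        have h9 : α^2 * R^2 = α * (α * R^2) := by ring
        rw [h9, hαR2]; ring
      have h8 : 0 ≤ α*Λ*R^2 := mul_nonneg (mul_nonneg hαpos.le (by linarith)) hR2.le
      linarith
    have hA : Λ * Real.exp (-α * ‖x - p‖^2)
        ≤ (4*α^2*‖x - p‖^2 - 2*α*N) * Real.exp (-α * ‖x - p‖^2) :=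
      mul_le_mul_of_nonneg_right hkey hexp_pos.le
    have hkpos : 0 < k := by rw [hkdef]; exact Real.exp_pos _
    have hB : 0 ≤ Λ * k := mul_nonneg (by linarith) hkpos.le
    linarith [hA, hB]
  -- inner sphere minimum and τ
  have hNpos : 0 < N := by omega
  have hsph_ne : (Metric.sphere p (R/2)).Nonempty := by
    refine ⟨p + (R/2) • EuclideanSpace.single (⟨0, hNpos⟩ : Fin N) (1:ℝ), ?_⟩
    rw [Metric.mem_sphere, dist_eq_norm]
    have h1 : p + (R/2) • EuclideanSpace.single (⟨0, hNpos⟩ : Fin N) (1:ℝ) - p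
        = (R/2) • EuclideanSpace.single (⟨0, hNpos⟩ : Fin N) (1:ℝ) := by abel
    rw [h1, norm_smul, EuclideanSpace.norm_single]
    simp [abs_of_pos hRpos, abs_of_nonneg (by linarith : (0:ℝ) ≤ R/2)]
  have hsphG : Metric.sphere p (R/2) ⊆ G := by
    intro x hx
    apply hball2
    rw [Metric.mem_sphere] at hx
    rw [Metric.mem_closedBall, hx]
    linarith
  obtain ⟨xs, hxs, hxsmin⟩ := (isCompact_sphere p (R/2)).exists_isMinOn hsph_ne
    (hv.continuousOn.mono hsphG)
  set m1 := v xs with hm1def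
  clear_value m1
  have hm1pos : 0 < m1 := by
    rw [hm1def]
    apply hvball
    rw [Metric.mem_sphere] at hxs
    rw [Metric.mem_ball, hxs]
    linarith
  set k2 := Real.exp (-α * (R/2)^2) - k with hk2def
  clear_value k2
  have hk2pos : 0 < k2 := by
    rw [hk2def, hkdef]
    have h1 : -α * R^2 < -α * (R/2)^2 := by nlinarith
    have := Real.exp_lt_exp.2 h1
    linarith
  set τ := m1 / k2 with hτdef
  clear_value τ
  have hτpos : 0 < τ := by rw [hτdef]; positivity
  -- the comparison function w on the annulus
  clear_value hb
  set w := fun x : E => v x - τ * hb x + τ * k with hwdef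
  clear_value w
  have hwC2 : ContDiffOn ℝ 2 w G := by
    rw [hwdef]
    exact (hv.sub (contDiffOn_const.mul hbC2G)).add contDiffOn_const
  set Acl := Metric.closedBall p R \ Metric.ball p (R/2) with hAcldef
  have hAclcomp : IsCompact Acl := (isCompact_closedBall p R).diff Metric.isOpen_ball
  have hAclG : Acl ⊆ G := fun x hx => hball2 hx.1
  have hAclne : Acl.Nonempty := by
    refine ⟨xs, ?_, ?_⟩
    · rw [Metric.mem_sphere] at hxs
      rw [Metric.mem_closedBall, hxs]; linarith
    · rw [Metric.mem_sphere] at hxs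
      rw [Metric.mem_ball, hxs]; simp
  have hwcont : ContinuousOn w Acl := (hwC2.continuousOn).mono hAclG
  -- w is nonnegative on the annulus
  have hwnn : ∀ x ∈ Acl, 0 ≤ w x := by
    intro x0 hx0
    by_contra hneg
    push_neg at hneg
    obtain ⟨xst, hxst, hxstmin⟩ := hAclcomp.exists_isMinOn hAclne hwcont
    have hwxst : w xst < 0 := lt_of_le_of_lt (hxstmin hx0) hneg
    have hd1 : dist xst p ≤ R := Metric.mem_closedBall.1 hxst.1
    have hd2 : R/2 ≤ dist xst p := by
      have h1 := hxst.2
      rw [Metric.mem_ball] at h1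
      push_neg at h1
      exact h1
    have hdRne : dist xst p ≠ R := by
      intro he
      have hbeq : hb xst = k := by rw [hbnorm, he, hkdef]
      have h1 : w xst = v xst := by rw [hwdef]; simp only; rw [hbeq]; ring
      rw [h1] at hwxst
      exact absurd hwxst (not_lt.2 (hv0 xst (hAclG hxst)))
    have hdR2ne : dist xst p ≠ R/2 := by
      intro he
      have hbeq : hb xst = Real.exp (-α * (R/2)^2) := by rw [hbnorm, he]
      have h1 : w xst = v xst - τ * k2 := by
        rw [hwdef]; simp only; rw [hbeq, hk2def]; ring
      have hτk2 : τ * k2 = m1 := by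
        rw [hτdef]; exact div_mul_cancel₀ m1 (ne_of_gt hk2pos)
      have h2 : m1 ≤ v xst := by
        rw [hm1def]
        exact hxsmin (by rwa [Metric.mem_sphere])
      rw [h1, hτk2] at hwxst
      linarith
    -- interior minimum
    set Aop := {x : E | R/2 < dist x p ∧ dist x p < R} with hAopdef
    have hAopen : IsOpen Aop := by
      have h1 : IsOpen {x : E | R/2 < dist x p} :=
        isOpen_lt continuous_const (continuous_id.dist continuous_const)
      have h2 : IsOpen {x : E | dist x p < R} :=
        isOpen_lt (continuous_id.dist continuous_const) continuous_const
      exact h1.inter h2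
    have hxstop : xst ∈ Aop := ⟨lt_of_le_of_ne hd2 (Ne.symm hdR2ne), lt_of_le_of_ne hd1 hdRne⟩
    have hAopG : Aop ⊆ G := fun x hx => hball2 (Metric.mem_closedBall.2 hx.2.le)
    have hAopAcl : Aop ⊆ Acl := by
      intro x hx
      refine ⟨Metric.mem_closedBall.2 hx.2.le, ?_⟩
      rw [Metric.mem_ball]
      push_neg
      exact hx.1.le
    have hQ : ∀ i : Fin N, 0 ≤ fderiv ℝ (fderiv ℝ w) xst (EuclideanSpace.single i 1)
        (EuclideanSpace.single i 1) :=
      fun i => q_nonneg_at_min hAopen (hwC2.mono hAopG) hxstop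
        (fun y1 hy1 => hxstmin (hAopAcl hy1)) _
    have hlapw : 0 ≤ lap w xst := by
      rw [lap_eq_sum]
      exact Finset.sum_nonneg (fun i _ => hQ i)
    have hlapw_eq : lap w xst = lap v xst - τ * lap hb xst := by
      rw [lap_eq_sum w, lap_eq_sum v, lap_eq_sum hb, Finset.mul_sum,
        ← Finset.sum_sub_distrib]
      apply Finset.sum_congr rfl
      intro i _
      rw [hwdef]
      exact q_sub_smul hGo hv hbC2G τ (τ*k) (hAclG hxst) _
    have h7 : lap v xst ≤ Λ * v xst := hlapv xst (Metric.mem_ball.2 hxstop.2)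
    have h8 : Λ * (hb xst - k) ≤ lap hb xst := hlaphb xst hxstop.1.le hd1
    have h8' : τ * (Λ * (hb xst - k)) ≤ τ * lap hb xst :=
      mul_le_mul_of_nonneg_left h8 hτpos.le
    have hexpand : Λ * w xst = Λ * v xst - τ * (Λ * (hb xst - k)) := by
      rw [hwdef]; ring
    have h9 : lap w xst ≤ Λ * w xst := by
      rw [hlapw_eq, hexpand]
      linarith
    have h10 : Λ * w xst < 0 := mul_neg_of_pos_of_neg (by linarith) hwxst
    linarith
  -- Hopf contradiction at ystar
  have hystG : ystar ∈ G := hystarS.1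
  have hystv : v ystar = 0 := hystarS.2
  have hystdist : dist ystar p = R := by rw [hRdef, hystard, dist_comm]
  have hfd0 : fderiv ℝ v ystar = 0 := by
    apply IsLocalMin.fderiv_eq_zero
    apply Filter.eventually_of_mem (hGo.mem_nhds hystG)
    intro x hx
    rw [hystv]
    exact hv0 x hx
  set d := R⁻¹ • (p - ystar) with hddef
  clear_value d
  have hdist_t : ∀ t : ℝ, t ≤ R → dist (ystar + t • d) p = R - t := by
    intro t ht
    have key : ystar + t • d - p = (1 - t/R) • (ystar - p) := by
      rw [hddef, div_eq_mul_inv]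
      module
    rw [dist_eq_norm, key, norm_smul]
    have hyp : ‖ystar - p‖ = R := by rw [← dist_eq_norm, hystdist]
    rw [hyp, Real.norm_eq_abs, abs_of_nonneg]
    · rw [sub_mul, one_mul, div_mul_cancel₀ _ (ne_of_gt hRpos)]
    · have h1 : t/R ≤ 1 := by rw [div_le_one hRpos]; exact ht
      linarith
  -- slope of v along d tends to 0
  have hvslope : Filter.Tendsto (fun t => v (ystar + t • d) / t) (𝓝[>] (0:ℝ)) (𝓝 0) := by
    have hA : HasDerivAt (fun t : ℝ => v (ystar + t • d)) (fderiv ℝ v (ystar + (0:ℝ) • d) d) 0 :=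
      line_hasDerivAt hGo (hv.differentiableOn (by norm_num)) ystar d (by simpa using hystG)
    have hA' : HasDerivAt (fun t : ℝ => v (ystar + t • d)) 0 0 := by
      have h1 : fderiv ℝ v (ystar + (0:ℝ) • d) d = 0 := by
        rw [show ystar + (0:ℝ) • d = ystar by simp, hfd0]
        simp
      rwa [h1] at hA
    have h2 := hasDerivAt_iff_tendsto_slope.1 hA'
    have heq : slope (fun t : ℝ => v (ystar + t • d)) 0 = fun t => v (ystar + t • d) / t := by
      funext t
      simp [slope_def_field, hystv]
    rw [heq] at h2
    exact h2.mono_left (nhdsWithin_mono 0 (fun t ht => ne_of_gt ht))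
  -- slope of the barrier along d tends to a positive limit
  set L := τ * (Real.exp (-α * R^2) * (2*α*R)) with hLdef
  clear_value L
  have hLpos : 0 < L := by
    rw [hLdef]
    have := Real.exp_pos (-α * R^2)
    positivity
  have hψ : Filter.Tendsto (fun t => τ * (hb (ystar + t • d) - k) / t) (𝓝[>] (0:ℝ)) (𝓝 L) := by
    have hg3 := ((((hasDerivAt_id (0:ℝ)).const_sub R).pow 2).const_mul (-α)).exp
    have hg4 : HasDerivAt (fun t : ℝ => τ * (Real.exp (-α * (R - t)^2) - k)) L 0 := by
      have h5 := (hg3.sub_const k).const_mul τ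
      simp only [id_eq, sub_zero, pow_one, Nat.cast_ofNat] at h5
      exact h5.congr_deriv (by rw [hLdef]; simp only [Pi.pow_apply, sub_zero]; ring)
    have hg5 : Filter.Tendsto (fun t => τ * (Real.exp (-α * (R - t)^2) - k) / t)
        (𝓝[>] (0:ℝ)) (𝓝 L) := by
      have h2 := hasDerivAt_iff_tendsto_slope.1 hg4
      have heq : slope (fun t : ℝ => τ * (Real.exp (-α * (R - t)^2) - k)) 0
          = fun t => τ * (Real.exp (-α * (R - t)^2) - k) / t := by
        funext t
        rw [slope_def_field]
        rw [show τ * (Real.exp (-α * (R - 0)^2) - k) = 0 by rw [hkdef]; norm_num]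
        ring
      rw [heq] at h2
      exact h2.mono_left (nhdsWithin_mono 0 (fun t ht => ne_of_gt ht))
    apply hg5.congr'
    filter_upwards [Ioo_mem_nhdsGT_of_mem (Set.left_mem_Ico.2 hRpos)] with t ht
    rw [hbnorm, hdist_t t (by linarith [ht.2])]
  -- comparison of slopes
  have hcomp : ∀ᶠ t in 𝓝[>] (0:ℝ), τ * (hb (ystar + t • d) - k) / t ≤ v (ystar + t • d) / t := by
    filter_upwards [Ioo_mem_nhdsGT_of_mem
      (Set.left_mem_Ico.2 (by linarith : (0:ℝ) < R/2))] with t ht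
    have hmem : ystar + t • d ∈ Acl := by
      have hdt := hdist_t t (by linarith [ht.2])
      constructor
      · rw [Metric.mem_closedBall, hdt]; linarith [ht.1]
      · rw [Metric.mem_ball, hdt]; push_neg; linarith [ht.2]
    have h1 := hwnn _ hmem
    have h2 : τ * (hb (ystar + t • d) - k) ≤ v (ystar + t • d) := by
      rw [hwdef] at h1
      simp only at h1
      nlinarith
    exact (div_le_div_iff_of_pos_right ht.1).2 h2
  have hfinal : L ≤ 0 := le_of_tendsto_of_tendsto hψ hvslope hcomp
  linarith

end Stmt8Aux

set_option maxHeartbeats 2000000 in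
/-- Comparison principle, first form.
If `u, v ∈ C²(G)` are nonnegative sub/supersolutions of `−Δw − (μ/δ_Ω²)w + w^q = 0` in an
open set `G ⊆ Ω` and `limsup_{x→∂G}(u − v) < 0`, then `u ≤ v` in `G`. -/
theorem stmt_8 (N : ℕ) (hN : 2 ≤ N) (Ω : Set (EuclideanSpace ℝ (Fin N)))
    (hΩo : IsOpen Ω) (hΩb : Bornology.IsBounded Ω) (hΩne : Ω.Nonempty)
    (hΩC2 : HasC2Boundary Ω) (μ q : ℝ) (hq : 1 < q)
    (G : Set (EuclideanSpace ℝ (Fin N))) (hGo : IsOpen G) (hGΩ : G ⊆ Ω)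
    (u v : EuclideanSpace ℝ (Fin N) → ℝ)
    (hu : ContDiffOn ℝ 2 u G) (hv : ContDiffOn ℝ 2 v G)
    (hu0 : ∀ x ∈ G, 0 ≤ u x) (hv0 : ∀ x ∈ G, 0 ≤ v x)
    (husub : ∀ x ∈ G,
      -(lap u x) - (μ / infDist x (frontier Ω) ^ 2) * u x + u x ^ q ≤ 0)
    (hvsup : ∀ x ∈ G,
      0 ≤ -(lap v x) - (μ / infDist x (frontier Ω) ^ 2) * v x + v x ^ q)
    (hbdry : ∃ ε > (0:ℝ), ∃ U : Set (EuclideanSpace ℝ (Fin N)),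
      IsOpen U ∧ frontier G ⊆ U ∧ ∀ x ∈ G ∩ U, u x - v x ≤ -ε) :
    ∀ x ∈ G, u x ≤ v x := by
  classical
  obtain ⟨ε, hε, U, hUo, hfrG, hUb⟩ := hbdry
  set c : EuclideanSpace ℝ (Fin N) → ℝ := fun x => μ / infDist x (frontier Ω) ^ 2 with hcdef
  have hcx : ∀ x, c x = μ / infDist x (frontier Ω) ^ 2 := fun x => rfl
  have hfrΩ : (frontier Ω).Nonempty := Stmt8Aux.frontier_nonempty' hN hΩb hΩne
  -- lower bounds for c on compact subsets
  have hcb : ∀ Kc : Set (EuclideanSpace ℝ (Fin N)), IsCompact Kc → Kc ⊆ G →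
      ∃ C : ℝ, ∀ x ∈ Kc, -C ≤ c x := by
    intro Kc hKc hKcG
    rcases Kc.eq_empty_or_nonempty with he | hne
    · exact ⟨0, by rw [he]; intro x hx; exact absurd hx (notMem_empty x)⟩
    have hcont : ContinuousOn (fun x => infDist x (frontier Ω)) Kc :=
      (continuous_infDist_pt _).continuousOn
    obtain ⟨xm, hxm, hxmmin⟩ := hKc.exists_isMinOn hne hcont
    have hδm : 0 < infDist xm (frontier Ω) := by
      have hxmΩ : xm ∈ Ω := hGΩ (hKcG hxm)
      have hnot : xm ∉ frontier Ω := by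
        intro hmem
        rw [hΩo.frontier_eq] at hmem
        exact hmem.2 hxmΩ
      exact (IsClosed.notMem_iff_infDist_pos isClosed_frontier hfrΩ).1 hnot
    refine ⟨|μ| / infDist xm (frontier Ω) ^ 2, ?_⟩
    intro x hx
    have h1 : infDist xm (frontier Ω) ≤ infDist x (frontier Ω) := hxmmin hx
    have h5 : infDist xm (frontier Ω) ^ 2 ≤ infDist x (frontier Ω) ^ 2 :=
      pow_le_pow_left₀ hδm.le h1 2
    have h3 : |c x| ≤ |μ| / infDist xm (frontier Ω) ^ 2 := by
      rw [hcx, abs_div, abs_of_nonneg (by positivity : (0:ℝ) ≤ infDist x (frontier Ω) ^ 2)]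
      exact div_le_div_of_nonneg_left (abs_nonneg μ) (by positivity) h5
    have h4 := neg_abs_le (c x)
    linarith
  have hvU : ∀ x ∈ G, x ∈ U → ε ≤ v x := by
    intro x hx hxU
    have h1 := hUb x ⟨hx, hxU⟩
    have h2 := hu0 x hx
    linarith
  have hsupv : ∀ x ∈ G, lap v x ≤ v x ^ q - c x * v x := by
    intro x hx
    have h1 := hvsup x hx
    rw [hcx]
    linarith
  have hvpos : ∀ x ∈ G, 0 < v x :=
    Stmt8Aux.supersol_pos hN hq hε hGo (hΩb.subset hGΩ) hv hv0 hsupv hcb hUo hfrG hvU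
  -- ratio maximum argument
  intro z hz
  by_contra hcon
  push_neg at hcon
  set K := closure G ∩ Uᶜ with hKdef
  have hKG : K ⊆ G := by
    intro x hx
    by_contra hxG
    exact hx.2 (hfrG (by rw [hGo.frontier_eq]; exact ⟨hx.1, hxG⟩))
  have hKcomp : IsCompact K :=
    Metric.isCompact_of_isClosed_isBounded
      (isClosed_closure.inter (isClosed_compl_iff.2 hUo))
      (((hΩb.closure).subset (closure_mono hGΩ)).subset inter_subset_left)
  have hzK : z ∈ K := by
    refine ⟨subset_closure hz, ?_⟩
    intro hzU
    have h1 := hUb z ⟨hz, hzU⟩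
    linarith
  set f := fun x => u x / v x with hfdef
  have hfx : ∀ x, f x = u x / v x := fun x => rfl
  have hfC2 : ContDiffOn ℝ 2 f G := hu.div hv (fun x hx => (hvpos x hx).ne')
  have hfcont : ContinuousOn f K := (hfC2.continuousOn).mono hKG
  obtain ⟨x0, hx0K, hx0max⟩ := hKcomp.exists_isMaxOn ⟨z, hzK⟩ hfcont
  have hx0G : x0 ∈ G := hKG hx0K
  set θ := f x0 with hθdef
  clear_value θ
  have hfθ : f x0 = θ := hθdef.symm
  have hθ1 : 1 < θ := by
    have h1 : f z ≤ θ := by rw [← hfθ]; exact hx0max hzK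
    have h2 : 1 < f z := by
      rw [hfx]
      exact (one_lt_div (hvpos z hz)).2 hcon
    linarith
  have hθpos : (0:ℝ) < θ := by linarith
  have hglobal : ∀ y ∈ G, f y ≤ θ := by
    intro y hy
    by_cases hyU : y ∈ U
    · have h1 := hUb y ⟨hy, hyU⟩
      have h2 : f y < 1 := by
        rw [hfx, div_lt_one (hvpos y hy)]
        linarith
      linarith
    · have h3 := hx0max ⟨subset_closure hy, hyU⟩
      have h4 : f y ≤ f x0 := h3
      rwa [hfθ] at h4
  have hfd0 : fderiv ℝ f x0 = 0 := by
    apply IsLocalMax.fderiv_eq_zero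
    apply Filter.eventually_of_mem (hGo.mem_nhds hx0G)
    intro x hx
    rw [hfθ]
    exact hglobal x hx
  have hueq : ∀ y ∈ G, u y = f y * v y := by
    intro y hy
    rw [hfx, div_mul_cancel₀]
    exact (hvpos y hy).ne'
  have hQle : ∀ i : Fin N,
      fderiv ℝ (fderiv ℝ u) x0 (EuclideanSpace.single i 1) (EuclideanSpace.single i 1)
      ≤ θ * fderiv ℝ (fderiv ℝ v) x0 (EuclideanSpace.single i 1)
        (EuclideanSpace.single i 1) := by
    intro i
    have h1 : fderiv ℝ (fderiv ℝ u) x0 = fderiv ℝ (fderiv ℝ (fun y => f y * v y)) x0 :=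
      Stmt8Aux.q_congr hGo hueq hx0G
    have hmul := Stmt8Aux.q_mul hGo hfC2 hv hx0G (EuclideanSpace.single i 1)
    have hQf : fderiv ℝ (fderiv ℝ f) x0 (EuclideanSpace.single i 1)
        (EuclideanSpace.single i 1) ≤ 0 := by
      apply Stmt8Aux.q_nonpos_at_max hGo hfC2 hx0G
      intro y hy
      rw [hfθ]
      exact hglobal y hy
    have hvx0 := hvpos x0 hx0G
    rw [h1, hmul, hfd0, hfθ]
    simp only [ContinuousLinearMap.zero_apply]
    have h2 : fderiv ℝ (fderiv ℝ f) x0 (EuclideanSpace.single i 1)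
        (EuclideanSpace.single i 1) * v x0 ≤ 0 :=
      mul_nonpos_of_nonpos_of_nonneg hQf hvx0.le
    nlinarith
  have hlapuv : lap u x0 ≤ θ * lap v x0 := by
    rw [Stmt8Aux.lap_eq_sum u x0, Stmt8Aux.lap_eq_sum v x0, Finset.mul_sum]
    exact Finset.sum_le_sum (fun i _ => hQle i)
  have hc1 := husub x0 hx0G
  have hc2 := hvsup x0 hx0G
  set A := μ / infDist x0 (frontier Ω) ^ 2 with hAdef
  clear_value A
  have hux0 : u x0 = θ * v x0 := by
    rw [← hfθ, hfx, div_mul_cancel₀]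
    exact (hvpos x0 hx0G).ne'
  have hvx0 := hvpos x0 hx0G
  rw [hux0] at hc1
  rw [Real.mul_rpow hθpos.le hvx0.le] at hc1
  -- hc1 : -(lap u x0) - A*(θ*v x0) + θ^q * v x0^q ≤ 0
  have h4 : θ * lap v x0 ≤ θ * (v x0 ^ q - A * v x0) :=
    mul_le_mul_of_nonneg_left (by linarith) hθpos.le
  have h5 : θ * (v x0 ^ q - A * v x0) = θ * v x0 ^ q - A * (θ * v x0) := by ring
  have h6 : θ ^ q * v x0 ^ q ≤ θ * v x0 ^ q := by linarith
  have h7 : θ ^ q ≤ θ := by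
    have h8 : (0:ℝ) < v x0 ^ q := Real.rpow_pos_of_pos hvx0 q
    exact le_of_mul_le_mul_right (by linarith) h8
  have h9 : q ≤ 1 := by
    have h10 : θ ^ q ≤ θ ^ (1:ℝ) := by rwa [Real.rpow_one]
    exact (Real.rpow_le_rpow_left_iff hθ1).1 h10
  linarith
end
end

section
/- Let μ < 1/4, set α_± = 1/2 ± √(1/4 − μ), and let q > 1. Fix y ∈ ∂Ω and define k_y(x) = δ_Ω(x)^{α_+} |x − y|^{2α_− − N} for x ∈ Ω. Then ∫_Ω k_y(x)^q δ_Ω(x)^{α_+} dx < ∞ if and only if q < (N + 1 − α_−)/(N − 1 − α_−) = (N + α_+)/(N − 1 − α_−). -/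
open MeasureTheory Metric Set
open scoped ENNReal NNReal

noncomputable section

/-! ### Auxiliary lemmas -/

lemma aux_pow_rpow_comm (x : ℝ) (hx : 0 ≤ x) (n : ℕ) (s : ℝ) :
    (x ^ n) ^ s = (x ^ s) ^ n := by
  rw [← Real.rpow_natCast x n, ← Real.rpow_mul hx, mul_comm, Real.rpow_mul hx,
    Real.rpow_natCast]

/-- Integrability of negative powers of the distance on a ball: for `s > -N`,
`∫⁻_{B(y,R)} |x - y|^s < ∞`. -/
lemma aux_lintegral_rpow_dist_lt_top {N : ℕ} (hN : 1 ≤ N)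
    (y : EuclideanSpace ℝ (Fin N)) {R s : ℝ} (hR : 0 < R) (hs : -(N : ℝ) < s) :
    ∫⁻ x in ball y R, ENNReal.ofReal (dist x y ^ s) < ⊤ := by
  haveI : Nonempty (Fin N) := ⟨⟨0, by omega⟩⟩
  haveI : Nontrivial (EuclideanSpace ℝ (Fin N)) := by
    refine nontrivial_of_ne (EuclideanSpace.single ⟨0, by omega⟩ (1:ℝ)) 0 ?_
    intro h
    have := congrArg (fun v : EuclideanSpace ℝ (Fin N) => v ⟨0, by omega⟩) h
    simp [EuclideanSpace.single] at this
  rcases le_or_gt 0 s with hs0 | hs0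
  · calc ∫⁻ x in ball y R, ENNReal.ofReal (dist x y ^ s)
        ≤ ∫⁻ _ in ball y R, ENNReal.ofReal (R ^ s) := by
          refine setLIntegral_mono' measurableSet_ball fun x hx => ?_
          exact ENNReal.ofReal_le_ofReal
            (Real.rpow_le_rpow dist_nonneg (le_of_lt (mem_ball.1 hx)) hs0)
      _ = ENNReal.ofReal (R ^ s) * volume (ball y R) := setLIntegral_const _ _
      _ < ⊤ := ENNReal.mul_lt_top ENNReal.ofReal_lt_top measure_ball_lt_top
  · set r : ℕ → ℝ := fun n => R * (1/2 : ℝ) ^ n with hr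
    have h2 : (0:ℝ) < 1/2 := by norm_num
    have hrpos : ∀ n, 0 < r n := fun n => by positivity
    have hsub : ball y R ⊆ {y} ∪ ⋃ n, (ball y (r n) \ ball y (r (n + 1))) := by
      intro x hx
      by_cases hxy : x = y
      · exact Or.inl (by simp [hxy])
      · right
        have hd : 0 < dist x y := dist_pos.2 hxy
        have hex : ∃ n, ¬ dist x y < r n := by
          obtain ⟨n, hn⟩ := exists_pow_lt_of_lt_one (div_pos hd hR) (by norm_num : (1/2:ℝ) < 1)
          refine ⟨n, not_lt.2 (le_of_lt ?_)⟩
          have := (lt_div_iff₀ hR).1 hn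
          rw [hr]; simpa [mul_comm] using this
        have h0 : dist x y < r 0 := by simpa [hr] using mem_ball.1 hx
        have hm0 : Nat.find hex ≠ 0 := by
          intro h
          exact Nat.find_spec hex (h ▸ h0)
        obtain ⟨m, hm⟩ : ∃ m, Nat.find hex = m + 1 := ⟨Nat.find hex - 1, by omega⟩
        refine mem_iUnion.2 ⟨m, ?_, ?_⟩
        · have := Nat.find_min hex (m := m) (by omega)
          exact mem_ball.2 (not_not.1 this)
        · have := Nat.find_spec hex
          rw [hm] at this
          simpa [mem_ball] using this
    have key : ∀ n, ∫⁻ x in ball y (r n) \ ball y (r (n + 1)), ENNReal.ofReal (dist x y ^ s)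
        ≤ ENNReal.ofReal (r (n+1) ^ s) * volume (ball y (r n)) := by
      intro n
      calc ∫⁻ x in ball y (r n) \ ball y (r (n + 1)), ENNReal.ofReal (dist x y ^ s)
          ≤ ∫⁻ _ in ball y (r n) \ ball y (r (n + 1)), ENNReal.ofReal (r (n+1) ^ s) := by
            refine setLIntegral_mono' (measurableSet_ball.diff measurableSet_ball) fun x hx => ?_
            refine ENNReal.ofReal_le_ofReal ?_
            have hge : r (n+1) ≤ dist x y := not_lt.1 (fun h => hx.2 (mem_ball.2 h))
            exact Real.rpow_le_rpow_of_nonpos (hrpos _) hge hs0.le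
        _ = ENNReal.ofReal (r (n+1) ^ s) * volume (ball y (r n) \ ball y (r (n + 1))) :=
            setLIntegral_const _ _
        _ ≤ ENNReal.ofReal (r (n+1) ^ s) * volume (ball y (r n)) := by
            gcongr
            exact diff_subset
    have hvol : ∀ n, volume (ball y (r n)) =
        ENNReal.ofReal (r n ^ N) * volume (ball (0 : EuclideanSpace ℝ (Fin N)) 1) := by
      intro n
      rw [Measure.addHaar_ball volume y (hrpos n).le, finrank_euclideanSpace_fin]
    set vB := volume (ball (0 : EuclideanSpace ℝ (Fin N)) 1) with hvB
    have hterm : ∀ n, ENNReal.ofReal (r (n+1) ^ s) * volume (ball y (r n))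
        ≤ ENNReal.ofReal (R ^ s * (1/2:ℝ) ^ s * R ^ N) *
            (ENNReal.ofReal ((1/2:ℝ) ^ (s + N))) ^ n * vB := by
      intro n
      refine le_of_eq ?_
      rw [hvol n]
      have e1 : r (n+1) ^ s = R ^ s * ((1/2:ℝ) ^ s) * (((1/2:ℝ) ^ s) ^ n) := by
        rw [hr]
        simp only
        rw [Real.mul_rpow hR.le (by positivity), aux_pow_rpow_comm _ h2.le, pow_succ]
        ring
      have e2 : (r n : ℝ) ^ N = R ^ N * (((1/2:ℝ) ^ N) ^ n) := by
        rw [hr]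
        simp only
        rw [mul_pow, pow_right_comm]
      have h1 : r (n+1) ^ s * (r n ^ N) =
          (R ^ s * (1/2:ℝ) ^ s * R ^ N) * ((1/2:ℝ) ^ (s + (N:ℝ))) ^ n := by
        rw [e1, e2, Real.rpow_add h2, Real.rpow_natCast, mul_pow]
        ring
      calc ENNReal.ofReal (r (n+1) ^ s) * (ENNReal.ofReal (r n ^ N) * vB)
          = ENNReal.ofReal (r (n+1) ^ s * r n ^ N) * vB := by
            rw [ENNReal.ofReal_mul (by positivity), mul_assoc]
        _ = ENNReal.ofReal ((R ^ s * (1/2:ℝ) ^ s * R ^ N) * ((1/2:ℝ) ^ (s + (N:ℝ))) ^ n) * vB := by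
            rw [h1]
        _ = ENNReal.ofReal (R ^ s * (1/2:ℝ) ^ s * R ^ N) *
              (ENNReal.ofReal ((1/2:ℝ) ^ (s + N))) ^ n * vB := by
            rw [ENNReal.ofReal_mul (by positivity), ENNReal.ofReal_pow (by positivity)]
    have hρ : ENNReal.ofReal ((1/2:ℝ) ^ (s + (N:ℝ))) < 1 := by
      rw [← ENNReal.ofReal_one]
      exact ENNReal.ofReal_lt_ofReal_iff_of_nonneg (by positivity) |>.2
        (Real.rpow_lt_one (by norm_num) (by norm_num) (by linarith))
    calc ∫⁻ x in ball y R, ENNReal.ofReal (dist x y ^ s)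
        ≤ ∫⁻ x in ({y} ∪ ⋃ n, (ball y (r n) \ ball y (r (n + 1)))),
            ENNReal.ofReal (dist x y ^ s) := lintegral_mono_set hsub
      _ ≤ (∫⁻ x in ({y} : Set _), ENNReal.ofReal (dist x y ^ s)) +
            ∫⁻ x in (⋃ n, (ball y (r n) \ ball y (r (n + 1)))),
              ENNReal.ofReal (dist x y ^ s) := lintegral_union_le _ _ _
      _ ≤ 0 + ∑' n, ∫⁻ x in ball y (r n) \ ball y (r (n + 1)),
              ENNReal.ofReal (dist x y ^ s) := by
            gcongr
            · rw [lintegral_singleton]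
              simp [Real.zero_rpow (ne_of_lt hs0)]
            · exact lintegral_iUnion_le _ _
      _ ≤ 0 + ∑' n, ENNReal.ofReal (R ^ s * (1/2:ℝ) ^ s * R ^ N) *
              (ENNReal.ofReal ((1/2:ℝ) ^ (s + N))) ^ n * vB := by
            gcongr with n
            exact (key n).trans (hterm n)
      _ < ⊤ := by
            rw [zero_add]
            have : ∑' n, ENNReal.ofReal (R ^ s * (1/2:ℝ) ^ s * R ^ N) *
                (ENNReal.ofReal ((1/2:ℝ) ^ (s + N))) ^ n * vB =
                ENNReal.ofReal (R ^ s * (1/2:ℝ) ^ s * R ^ N) *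
                  (∑' n, (ENNReal.ofReal ((1/2:ℝ) ^ (s + N))) ^ n) * vB := by
              rw [ENNReal.tsum_mul_right, ENNReal.tsum_mul_left]
            rw [this, ENNReal.tsum_geometric]
            refine ENNReal.mul_lt_top (ENNReal.mul_lt_top ENNReal.ofReal_lt_top ?_)
              measure_ball_lt_top
            rw [lt_top_iff_ne_top, ENNReal.inv_ne_top]
            exact (tsub_pos_of_lt hρ).ne'

set_option maxHeartbeats 1000000 in
/-- Interior cone of balls at a boundary point of a `C²` domain. -/
lemma aux_cone {N : ℕ} (Ω : Set (EuclideanSpace ℝ (Fin N))) (hΩo : IsOpen Ω)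
    (hΩC2 : HasC2Boundary Ω) (y : EuclideanSpace ℝ (Fin N)) (hy : y ∈ frontier Ω) :
    ∃ (w : EuclideanSpace ℝ (Fin N)) (c ε : ℝ), 0 < ‖w‖ ∧ 0 < c ∧ c ≤ ‖w‖ / 8 ∧ 0 < ε ∧ ε ≤ 1 ∧
      ∀ t : ℝ, 0 < t → t ≤ ε → ball (y + t • w) (2 * c * t) ⊆ Ω := by
  obtain ⟨U, f, hU, hyU, hf, hf', hΩU⟩ := hΩC2 y hy
  have hyΩ : y ∉ Ω := by
    rw [hΩo.frontier_eq] at hy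
    exact hy.2
  have hfy_cd : ContDiffAt ℝ 2 f y := hf.contDiffAt (hU.mem_nhds hyU)
  have hdy : DifferentiableAt ℝ f y := hfy_cd.differentiableAt (by norm_num)
  set L := fderiv ℝ f y with hLdef
  have hL : L ≠ 0 := hf' y hyU
  obtain ⟨u, hu⟩ : ∃ u, L u ≠ 0 := by
    by_contra h
    push_neg at h
    exact hL (ContinuousLinearMap.ext fun v => by simp [h v])
  set w : EuclideanSpace ℝ (Fin N) := (-(L u)⁻¹) • u with hwdef
  have hLw : L w = -1 := by
    rw [hwdef]
    rw [L.map_smul]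
    rw [smul_eq_mul]
    field_simp
  have hwne : w ≠ 0 := by
    intro h
    rw [h, map_zero] at hLw
    norm_num at hLw
  have hwpos : 0 < ‖w‖ := norm_pos_iff.2 hwne
  clear_value w
  clear hwdef hu hwne
  -- f y = 0
  have hfy_le : f y ≤ 0 := by
    have hyc : y ∈ closure (Ω ∩ U) := by
      have h1 : y ∈ U ∩ closure Ω := ⟨hyU, frontier_subset_closure hy⟩
      have := hU.inter_closure h1
      rwa [inter_comm] at this
    haveI hne : (nhdsWithin y (Ω ∩ U)).NeBot := mem_closure_iff_nhdsWithin_neBot.1 hyc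
    refine le_of_tendsto (hfy_cd.continuousAt.continuousWithinAt :
        ContinuousWithinAt f (Ω ∩ U) y) ?_
    filter_upwards [self_mem_nhdsWithin] with x hx
    have : x ∈ {x | x ∈ U ∧ f x < 0} := hΩU ▸ hx
    exact this.2.le
  have hfy_ge : 0 ≤ f y := by
    by_contra h
    push_neg at h
    have h1 : U ∩ f ⁻¹' Iio 0 ∈ nhds y :=
      Filter.inter_mem (hU.mem_nhds hyU) (hfy_cd.continuousAt.preimage_mem_nhds (Iio_mem_nhds h))
    have h2 : y ∈ U ∩ f ⁻¹' Iio 0 := mem_of_mem_nhds h1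
    have : y ∈ Ω ∩ U := by
      rw [hΩU]
      exact ⟨h2.1, h2.2⟩
    exact hyΩ this.1
  have hfy : f y = 0 := le_antisymm hfy_le hfy_ge
  -- Lipschitz
  obtain ⟨K, tset, htset, hK⟩ := (hfy_cd.of_le (by norm_num)).exists_lipschitzOnWith
  obtain ⟨r₀, hr₀, hball₀⟩ := Metric.mem_nhds_iff.1 (Filter.inter_mem htset (hU.mem_nhds hyU))
  -- derivative along w
  have h1 : HasDerivAt (fun t : ℝ => y + t • w) w 0 := by
    simpa using ((hasDerivAt_id (0 : ℝ)).smul_const w).const_add y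
  have hline : HasDerivAt (fun t : ℝ => f (y + t • w)) (-1) 0 := by
    have h2 := hdy.hasFDerivAt
    have h3 : HasFDerivAt f L (y + (0:ℝ) • w) := by simpa using h2
    have h4 := h3.comp_hasDerivAt 0 h1
    rw [hLw] at h4
    exact h4
  have hslope := hasDerivAt_iff_tendsto_slope.1 hline
  have hev : ∀ᶠ t in nhdsWithin (0:ℝ) {(0:ℝ)}ᶜ,
      slope (fun t : ℝ => f (y + t • w)) 0 t < -(1/2) := by
    refine (tendsto_order.1 hslope).2 (-(1/2)) (by norm_num)
  rw [eventually_nhdsWithin_iff] at hev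
  rw [Metric.eventually_nhds_iff] at hev
  obtain ⟨ε₁, hε₁, hslope'⟩ := hev
  have hfz : ∀ t : ℝ, 0 < t → t < ε₁ → f (y + t • w) < -(t/2) := by
    intro t ht htε
    have hmem : t ∈ ({(0:ℝ)}ᶜ : Set ℝ) := by simp [ht.ne']
    have := hslope' (by simpa [Real.dist_eq, abs_of_pos ht] using htε) hmem
    rw [slope_def_field] at this
    have h0 : f (y + (0:ℝ) • w) = 0 := by simpa using hfy
    rw [h0] at this
    have := (div_lt_iff₀ ht).1 (by simpa using this)
    linarith
  -- constants
  set Kr : ℝ := (K : ℝ) with hKr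
  have hKr0 : 0 ≤ Kr := by rw [hKr]; exact K.coe_nonneg
  set c : ℝ := min (1 / (8 * (Kr + 1))) (‖w‖ / 8) with hcdef
  have hc : 0 < c := lt_min (by positivity) (by positivity)
  have hcK' : c ≤ 1 / (8 * (Kr + 1)) := min_le_left _ _
  have hcw8 : c ≤ ‖w‖ / 8 := min_le_right _ _
  have hcK : 2 * Kr * c ≤ 1 / 4 := by
    have h2 : 0 < 8 * (Kr + 1) := by positivity
    have h1 := hcK'
    rw [le_div_iff₀ h2] at h1
    nlinarith
  set ε : ℝ := min (min (ε₁ / 2) 1) (r₀ / (2 * (‖w‖ + 1))) with hεdef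
  have hε : 0 < ε := lt_min (lt_min (by linarith) one_pos) (by positivity)
  have hεε₁ : ε ≤ ε₁ / 2 := (min_le_left _ _).trans (min_le_left _ _)
  have hε1 : ε ≤ 1 := (min_le_left _ _).trans (min_le_right _ _)
  have hεr₀ : ε ≤ r₀ / (2 * (‖w‖ + 1)) := min_le_right _ _
  clear_value c ε
  clear hcdef hεdef hL hdy hfy_le hfy_ge
  refine ⟨w, c, ε, hwpos, hc, hcw8, hε, hε1, ?_⟩
  intro t ht htε x hx
  have htε₁ : t < ε₁ := by linarith [htε.trans hεε₁]
  have htr₀ : t ≤ r₀ / (2 * (‖w‖ + 1)) := htε.trans hεr₀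
  have hdzy : dist (y + t • w) y = t * ‖w‖ := by
    rw [dist_eq_norm]
    simp [norm_smul, abs_of_pos ht]
  have hzball : y + t • w ∈ ball y r₀ := by
    rw [mem_ball, hdzy]
    have : t * ‖w‖ ≤ (r₀ / (2 * (‖w‖ + 1))) * ‖w‖ := by
      apply mul_le_mul_of_nonneg_right htr₀ (norm_nonneg _)
    have h2 : (r₀ / (2 * (‖w‖ + 1))) * ‖w‖ < r₀ := by
      rw [div_mul_eq_mul_div, div_lt_iff₀ (by positivity)]
      nlinarith [norm_nonneg w]
    linarith
  have hxball : x ∈ ball y r₀ := by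
    rw [mem_ball]
    have h1 : dist x y ≤ dist x (y + t • w) + dist (y + t • w) y := dist_triangle _ _ _
    have h2 : dist x (y + t • w) < 2 * c * t := mem_ball.1 hx
    have h3 : 2 * c * t ≤ t * ‖w‖ / 4 := by
      have := mul_le_mul_of_nonneg_right hcw8 ht.le
      linarith
    have h4 : t * ‖w‖ ≤ (r₀ / (2 * (‖w‖ + 1))) * ‖w‖ :=
      mul_le_mul_of_nonneg_right htr₀ (norm_nonneg _)
    have h5 : (r₀ / (2 * (‖w‖ + 1))) * ‖w‖ < r₀ / 2 := by
      rw [div_mul_eq_mul_div, div_lt_div_iff₀ (by positivity) (by norm_num)]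
      nlinarith [norm_nonneg w]
    rw [hdzy] at h1
    linarith
  have hfx : f x < 0 := by
    have hxt : x ∈ tset := (hball₀ hxball).1
    have hzt : y + t • w ∈ tset := (hball₀ hzball).1
    have hlip : dist (f x) (f (y + t • w)) ≤ Kr * dist x (y + t • w) := by
      have := hK.dist_le_mul x hxt (y + t • w) hzt
      exact this
    have h2 : f x - f (y + t • w) ≤ Kr * dist x (y + t • w) := by
      have := abs_sub_abs_le_abs_sub (f x) (f (y + t • w))
      rw [Real.dist_eq] at hlip
      have := le_abs_self (f x - f (y + t • w))
      linarith
    have h3 : dist x (y + t • w) < 2 * c * t := mem_ball.1 hx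
    have h4 : Kr * dist x (y + t • w) ≤ Kr * (2 * c * t) :=
      mul_le_mul_of_nonneg_left h3.le hKr0
    have h5 := hfz t ht htε₁
    nlinarith
  have hxU : x ∈ U := (hball₀ hxball).2
  have : x ∈ Ω ∩ U := by
    rw [hΩU]
    exact ⟨hxU, hfx⟩
  exact this.1

set_option maxHeartbeats 2000000 in
/-- Critical exponent for the Martin-kernel-type function.
For `y ∈ ∂Ω` and `k_y(x) = δ_Ω(x)^{α₊} |x−y|^{2α₋−N}`, the integral
`∫_Ω k_y^q δ_Ω^{α₊} dx` is finite iff `q < (N + 1 − α₋)/(N − 1 − α₋)`. -/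
theorem stmt_15 (N : ℕ) (hN : 2 ≤ N) (Ω : Set (EuclideanSpace ℝ (Fin N)))
    (hΩo : IsOpen Ω) (hΩb : Bornology.IsBounded Ω) (hΩne : Ω.Nonempty)
    (hΩC2 : HasC2Boundary Ω) (μ q : ℝ) (hμ : μ < 1/4) (hq : 1 < q)
    (y : EuclideanSpace ℝ (Fin N)) (hy : y ∈ frontier Ω) :
    IntegrableOn (fun x =>
        (infDist x (frontier Ω) ^ (1/2 + Real.sqrt (1/4 - μ)) *
          dist x y ^ (2 * (1/2 - Real.sqrt (1/4 - μ)) - N)) ^ q *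
        infDist x (frontier Ω) ^ (1/2 + Real.sqrt (1/4 - μ))) Ω volume ↔
      q < ((N : ℝ) + 1 - (1/2 - Real.sqrt (1/4 - μ))) /
          ((N : ℝ) - 1 - (1/2 - Real.sqrt (1/4 - μ))) := by
  have hs : 0 < Real.sqrt (1/4 - μ) := Real.sqrt_pos.2 (by linarith)
  set s := Real.sqrt (1/4 - μ) with hs_def
  have hN2 : (2:ℝ) ≤ (N:ℝ) := by exact_mod_cast hN
  set ap : ℝ := 1/2 + s with hap
  set am : ℝ := 1/2 - s with ham
  set A : ℝ := ap * q + ap with hA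
  set B : ℝ := (2 * am - (N:ℝ)) * q with hB
  set g : EuclideanSpace ℝ (Fin N) → ℝ := fun x =>
    (infDist x (frontier Ω) ^ ap * dist x y ^ (2 * am - (N:ℝ))) ^ q *
      infDist x (frontier Ω) ^ ap with hgdef
  have hyΩ : y ∉ Ω := by
    have hy' := hy
    rw [hΩo.frontier_eq] at hy'
    exact hy'.2
  have hDpos : (0:ℝ) < (N:ℝ) - 1 - am := by rw [ham]; linarith
  have hiff : (q < ((N:ℝ) + 1 - am) / ((N:ℝ) - 1 - am)) ↔ 0 < A + B + (N:ℝ) := by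
    rw [lt_div_iff₀ hDpos]
    have hEq : A + B + (N:ℝ) = ((N:ℝ) + 1 - am) - q * ((N:ℝ) - 1 - am) := by
      rw [hA, hB, hap, ham]; ring
    constructor <;> intro h <;> linarith
  have hap_pos : 0 < ap := by rw [hap]; linarith
  have hApos : 0 < A := by
    rw [hA]
    nlinarith
  have hBneg : B < 0 := by
    have h1 : 2 * am - (N:ℝ) < 0 := by rw [ham]; linarith
    rw [hB]
    exact mul_neg_of_neg_of_pos h1 (by linarith)
  have key_pos : ∀ x ∈ Ω, 0 < infDist x (frontier Ω) ∧ 0 < dist x y := by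
    intro x hx
    constructor
    · refine (isClosed_frontier.notMem_iff_infDist_pos ⟨y, hy⟩).1 ?_
      intro hxf
      rw [hΩo.frontier_eq] at hxf
      exact hxf.2 hx
    · exact dist_pos.2 (fun h => hyΩ (h ▸ hx))
  have hg_eq : ∀ x ∈ Ω, g x = dist x y ^ B * infDist x (frontier Ω) ^ A := by
    intro x hx
    obtain ⟨hδ, hd⟩ := key_pos x hx
    rw [hgdef]
    dsimp only
    rw [Real.mul_rpow (Real.rpow_nonneg infDist_nonneg _) (Real.rpow_nonneg dist_nonneg _),
      ← Real.rpow_mul infDist_nonneg, ← Real.rpow_mul dist_nonneg, hB, hA, mul_right_comm,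
      ← Real.rpow_add hδ]
    exact mul_comm _ _
  have hgnn : ∀ x, 0 ≤ g x := fun x =>
    mul_nonneg (Real.rpow_nonneg (mul_nonneg (Real.rpow_nonneg infDist_nonneg _)
      (Real.rpow_nonneg dist_nonneg _)) _) (Real.rpow_nonneg infDist_nonneg _)
  have hgm : Measurable g := by
    have h1 : Measurable fun x : EuclideanSpace ℝ (Fin N) => infDist x (frontier Ω) :=
      (continuous_infDist_pt _).measurable
    have h2 : Measurable fun x : EuclideanSpace ℝ (Fin N) => dist x y :=
      (continuous_id.dist continuous_const).measurable
    exact (((h1.pow measurable_const).mul (h2.pow measurable_const)).pow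
      measurable_const).mul (h1.pow measurable_const)
  constructor
  · -- integrable → subcritical
    intro hInt
    by_contra hqc
    have hABN : A + B + (N:ℝ) ≤ 0 := not_lt.1 (fun h => hqc (hiff.2 h))
    obtain ⟨w, c, ε, hw, hc, hcw, hε, hε1, hcone⟩ := aux_cone Ω hΩo hΩC2 y hy
    set t : ℕ → ℝ := fun n => ε * (1/2 : ℝ) ^ n with ht
    have htpos : ∀ n, 0 < t n := fun n => by positivity
    have htle : ∀ n, t n ≤ ε := by
      intro n
      rw [ht]
      have h1 : (1/2:ℝ) ^ n ≤ 1 := pow_le_one₀ (by norm_num) (by norm_num)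
      nlinarith
    have hthalf : ∀ n m, n < m → t m ≤ t n / 2 := by
      intro n m h
      rw [ht]
      simp only
      have h1 : (1/2:ℝ) ^ m ≤ (1/2:ℝ) ^ (n+1) :=
        pow_le_pow_of_le_one (by norm_num) (by norm_num) (by omega)
      calc ε * (1/2:ℝ) ^ m ≤ ε * ((1/2:ℝ) ^ n * (1/2)) := by
            rw [← pow_succ]
            exact mul_le_mul_of_nonneg_left h1 hε.le
        _ = ε * (1/2:ℝ) ^ n / 2 := by ring
    set z : ℕ → EuclideanSpace ℝ (Fin N) := fun n => y + (t n) • w with hz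
    set Bl : ℕ → Set (EuclideanSpace ℝ (Fin N)) := fun n => ball (z n) (c * t n) with hBl
    have hB2 : ∀ n, ball (z n) (2 * c * t n) ⊆ Ω := fun n => hcone (t n) (htpos n) (htle n)
    have hBsub : ∀ n, Bl n ⊆ Ω := by
      intro n
      refine subset_trans (ball_subset_ball ?_) (hB2 n)
      nlinarith [htpos n]
    have hδlb : ∀ n, ∀ x ∈ Bl n, c * t n ≤ infDist x (frontier Ω) := by
      intro n x hx
      by_contra h
      push_neg at h
      obtain ⟨p, hp, hpd⟩ := (infDist_lt_iff ⟨y, hy⟩).1 h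
      have hpΩ : p ∈ Ω := by
        apply hB2 n
        rw [mem_ball]
        have h1 : dist p (z n) ≤ dist p x + dist x (z n) := dist_triangle _ _ _
        have h2 : dist x (z n) < c * t n := mem_ball.1 hx
        have h3 : dist p x < c * t n := by rw [dist_comm]; exact hpd
        linarith
      rw [hΩo.frontier_eq] at hp
      exact hp.2 hpΩ
    have hdzy : ∀ n, dist (z n) y = t n * ‖w‖ := by
      intro n
      rw [hz]
      simp only
      rw [dist_eq_norm]
      simp [norm_smul, abs_of_pos (htpos n)]
    set M : ℝ := c + ‖w‖ with hM
    have hMpos : 0 < M := by rw [hM]; positivity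
    have hdub : ∀ n, ∀ x ∈ Bl n, dist x y ≤ M * t n := by
      intro n x hx
      have h1 := dist_triangle x (z n) y
      have h2 : dist x (z n) < c * t n := mem_ball.1 hx
      rw [hdzy n] at h1
      calc dist x y ≤ c * t n + t n * ‖w‖ := by linarith
        _ = M * t n := by rw [hM]; ring
    set vB := volume (ball (0 : EuclideanSpace ℝ (Fin N)) 1) with hvB
    set κ : ℝ≥0∞ := ENNReal.ofReal (M ^ B * c ^ A * c ^ N) * vB with hκ
    haveI : Nonempty (Fin N) := ⟨⟨0, by omega⟩⟩
    haveI : Nontrivial (EuclideanSpace ℝ (Fin N)) := by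
      refine nontrivial_of_ne (EuclideanSpace.single ⟨0, by omega⟩ (1:ℝ)) 0 ?_
      intro hcon
      have := congrArg (fun v : EuclideanSpace ℝ (Fin N) => v ⟨0, by omega⟩) hcon
      simp [EuclideanSpace.single] at this
    have hκne : κ ≠ 0 := by
      rw [hκ]
      refine mul_ne_zero ?_ ?_
      · refine (ENNReal.ofReal_pos.2 ?_).ne'
        have := Real.rpow_pos_of_pos hMpos B
        have := Real.rpow_pos_of_pos hc A
        have := pow_pos hc N
        positivity
      · exact (measure_ball_pos volume _ one_pos).ne'
    have hlb : ∀ n, κ ≤ ∫⁻ x in Bl n, ENNReal.ofReal (g x) := by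
      intro n
      have hvol : volume (Bl n) = ENNReal.ofReal ((c * t n) ^ N) * vB := by
        rw [hBl]
        simp only
        rw [Measure.addHaar_ball volume _ (by positivity : (0:ℝ) ≤ c * t n),
          finrank_euclideanSpace_fin]
      have hptw : ∀ x ∈ Bl n, (M * t n) ^ B * (c * t n) ^ A ≤ g x := by
        intro x hx
        have hxΩ : x ∈ Ω := hBsub n hx
        obtain ⟨hδ, hd⟩ := key_pos x hxΩ
        rw [hg_eq x hxΩ]
        have e1 : (M * t n) ^ B ≤ dist x y ^ B :=
          Real.rpow_le_rpow_of_nonpos hd (hdub n x hx) hBneg.le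
        have e2 : (c * t n) ^ A ≤ infDist x (frontier Ω) ^ A :=
          Real.rpow_le_rpow (by positivity) (hδlb n x hx) hApos.le
        exact mul_le_mul e1 e2 (Real.rpow_nonneg (by positivity) _)
          (Real.rpow_nonneg dist_nonneg _)
      have hκle : κ ≤ ENNReal.ofReal ((M * t n) ^ B * (c * t n) ^ A) * volume (Bl n) := by
        rw [hvol, hκ, ← mul_assoc, ← ENNReal.ofReal_mul (by positivity)]
        refine mul_le_mul_left (ENNReal.ofReal_le_ofReal ?_) vB
        have e2 : (M * t n) ^ B * (c * t n) ^ A * (c * t n) ^ N =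
            (M ^ B * c ^ A * c ^ N) * (t n) ^ (A + B + (N:ℝ)) := by
          rw [Real.mul_rpow hMpos.le (htpos n).le, Real.mul_rpow hc.le (htpos n).le, mul_pow,
            ← Real.rpow_natCast (t n) N]
          have e3 : (t n) ^ B * (t n) ^ A * (t n) ^ ((N:ℕ):ℝ) = (t n) ^ (A + B + (N:ℝ)) := by
            rw [← Real.rpow_add (htpos n), ← Real.rpow_add (htpos n)]
            congr 1
            push_cast
            ring
          calc M ^ B * (t n) ^ B * (c ^ A * (t n) ^ A) * (c ^ N * (t n) ^ ((N:ℕ):ℝ))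
              = (M ^ B * c ^ A * c ^ N) * ((t n) ^ B * (t n) ^ A * (t n) ^ ((N:ℕ):ℝ)) := by
                ring
            _ = (M ^ B * c ^ A * c ^ N) * (t n) ^ (A + B + (N:ℝ)) := by rw [e3]
        rw [e2]
        have hone : 1 ≤ (t n) ^ (A + B + (N:ℝ)) :=
          Real.one_le_rpow_of_pos_of_le_one_of_nonpos (htpos n) ((htle n).trans hε1) hABN
        have hC0 : 0 ≤ M ^ B * c ^ A * c ^ N := by
          have := Real.rpow_pos_of_pos hMpos B
          have := Real.rpow_pos_of_pos hc A
          have := pow_pos hc N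
          positivity
        nlinarith
      refine hκle.trans ?_
      calc ENNReal.ofReal ((M * t n) ^ B * (c * t n) ^ A) * volume (Bl n)
          = ∫⁻ _ in Bl n, ENNReal.ofReal ((M * t n) ^ B * (c * t n) ^ A) :=
            (setLIntegral_const _ _).symm
        _ ≤ ∫⁻ x in Bl n, ENNReal.ofReal (g x) := by
            refine setLIntegral_mono' measurableSet_ball fun x hx => ?_
            exact ENNReal.ofReal_le_ofReal (hptw x hx)
    have hdisj : Pairwise (Function.onFun Disjoint Bl) := by
      have main : ∀ n m, n < m → Disjoint (Bl n) (Bl m) := by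
        intro n m h
        refine ball_disjoint_ball ?_
        have hd : dist (z n) (z m) = (t n - t m) * ‖w‖ := by
          rw [hz]
          simp only
          rw [dist_eq_norm, add_sub_add_left_eq_sub, ← sub_smul, norm_smul, Real.norm_eq_abs]
          have h1 : t m ≤ t n / 2 := hthalf n m h
          rw [abs_of_pos (by linarith [htpos n, htpos m, htpos n])]
        rw [hd]
        have h1 : t m ≤ t n / 2 := hthalf n m h
        have e1 : c * t m ≤ c * t n := mul_le_mul_of_nonneg_left
          (by linarith [htpos m]) hc.le
        have e2 : c * t n ≤ (‖w‖ / 8) * t n := mul_le_mul_of_nonneg_right hcw (htpos n).le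
        have e3 : (t n / 2) * ‖w‖ ≤ (t n - t m) * ‖w‖ :=
          mul_le_mul_of_nonneg_right (by linarith) (norm_nonneg w)
        nlinarith [htpos n, htpos m, norm_nonneg w]
      intro n m hnm
      rcases lt_or_gt_of_ne hnm with h | h
      · exact main n m h
      · exact (main m n h).symm
    have hfin := hInt.2
    rw [hasFiniteIntegral_iff_ofReal (ae_of_all _ hgnn)] at hfin
    have h1 : ∫⁻ x in ⋃ n, Bl n, ENNReal.ofReal (g x) ≤ ∫⁻ x in Ω, ENNReal.ofReal (g x) :=
      lintegral_mono_set (iUnion_subset hBsub)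
    rw [lintegral_iUnion (fun n => measurableSet_ball) hdisj] at h1
    have h2 : (⊤ : ℝ≥0∞) ≤ ∑' n, ∫⁻ x in Bl n, ENNReal.ofReal (g x) := by
      calc (⊤ : ℝ≥0∞) = ∑' _ : ℕ, κ := (ENNReal.tsum_const_eq_top_of_ne_zero hκne).symm
        _ ≤ ∑' n, ∫⁻ x in Bl n, ENNReal.ofReal (g x) := ENNReal.tsum_le_tsum hlb
    exact absurd hfin (not_lt.2 (h2.trans h1))
  · -- subcritical → integrable
    intro hqc
    have hABN : 0 < A + B + (N:ℝ) := hiff.1 hqc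
    obtain ⟨R, hRpos, hΩR⟩ := hΩb.subset_ball_lt 0 y
    have hdom : IntegrableOn (fun x => dist x y ^ (B + A)) Ω volume := by
      refine IntegrableOn.mono_set ?_ hΩR
      refine ⟨(((continuous_id.dist continuous_const).measurable).pow
        measurable_const).aestronglyMeasurable, ?_⟩
      rw [hasFiniteIntegral_iff_ofReal
        (ae_of_all _ fun x => Real.rpow_nonneg dist_nonneg _)]
      exact aux_lintegral_rpow_dist_lt_top (by omega) y hRpos (by linarith)
    refine Integrable.mono hdom hgm.aestronglyMeasurable ?_
    filter_upwards [ae_restrict_mem hΩo.measurableSet] with x hx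
    obtain ⟨hδ, hd⟩ := key_pos x hx
    rw [Real.norm_of_nonneg (hgnn x), Real.norm_of_nonneg (Real.rpow_nonneg dist_nonneg _),
      hg_eq x hx, Real.rpow_add hd]
    have hδd : infDist x (frontier Ω) ≤ dist x y := infDist_le_dist_of_mem hy
    exact mul_le_mul_of_nonneg_left (Real.rpow_le_rpow infDist_nonneg hδd hApos.le)
      (Real.rpow_nonneg dist_nonneg _)
end
end
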